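/- arXiv:1312.6432 — 6 statements merged into one kernel-verified Lean document; each statement's English description precedes it below -/
import Mathlib

section
/- The i-SIR kernel P_N is reversible with respect to π, i.e. ∫_A P_N(x,B) π(dx) = ∫_B P_N(x,A) π(dx) for all measurable A, B ⊆ X, and it is a positive operator on L²(X,π), i.e. ∫_X f(x) (∫_X f(y) P_N(x,dy)) π(dx) ≥ 0 for every f ∈ L²(X,π). -/
/-!
Write `π = G • M`. Integrating out the starting point, the joint law of `(x, y)` with
`x ~ π` and `y ~ P_N(x, ·)` is `∑ₖ` the law of `(z⁰, zᵏ)` under `M^⊗N` weighted by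
`G(z⁰) G(zᵏ) / ∑ⱼ G(zʲ)`. Since `M^⊗N` is exchangeable and this weight is symmetric, the
joint law is invariant under swapping the two coordinates, which is reversibility.
Averaging over which particle plays the role of `x` gives
`N ⟨f, P_N f⟩_π = ∫ (∑ₖ G(zᵏ) f(zᵏ))² / ∑ⱼ G(zʲ) dM^⊗N ≥ 0`.
For `f ∈ L²(π)` that is not measurable, both marginals of the joint law are dominated by `π`,
so `f(x) f(y)` is integrable and `f` may be replaced by a measurable version.
-/

open MeasureTheory
open scoped ENNReal

/-- The full particle vector: `z¹ = x` and `z² , …, z^N` given by `y`, where `N = n + 2`. -/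
def isirVec {X : Type*} (n : ℕ) (x : X) (y : Fin (n + 1) → X) : Fin (n + 2) → X :=
  Fin.cons x y

/-- The i-SIR kernel with `N = n + 2` particles: starting from `x`, draw `n + 1` fresh
particles i.i.d. from `M`, set `z¹ = x`, and select particle `z^k` with probability
proportional to `G(z^k)` (with the convention `0/0 = 0`). -/
noncomputable def isirKernel {X : Type*} [MeasurableSpace X]
    (M : Measure X) (G : X → ℝ) (n : ℕ) (x : X) : Measure X :=
  ∑ k : Fin (n + 2),
    Measure.map (fun y : Fin (n + 1) → X => isirVec n x y k)
      ((Measure.pi fun _ : Fin (n + 1) => M).withDensity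
        (fun y => ENNReal.ofReal
          (G (isirVec n x y k) / ∑ j : Fin (n + 2), G (isirVec n x y j))))

open ProbabilityTheory

theorem measurePreserving_comp_perm {X ι : Type*} [MeasurableSpace X] [Fintype ι]
    (μ : Measure X) [SigmaFinite μ] (σ : Equiv.Perm ι) :
    MeasurePreserving (fun z : ι → X => z ∘ σ) (Measure.pi fun _ => μ)
      (Measure.pi fun _ => μ) := by
  convert measurePreserving_arrowCongr' (fun _ => μ) (fun _ => μ) σ.symm (MeasurableEquiv.refl X)
    fun _ => MeasurePreserving.id μ
  rfl

section SymmetricJointLaw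

variable {X : Type*} [MeasurableSpace X] {π : Measure X} [SFinite π] {κ : Kernel X X}
  [IsSFiniteKernel κ]

theorem ProbabilityTheory.Kernel.isReversible_of_map_swap_compProd
    (hsymm : (π ⊗ₘ κ).map Prod.swap = π ⊗ₘ κ) : κ.IsReversible π := by
  intro A B hA hB
  rw [← Measure.compProd_apply_prod hA hB, ← Measure.compProd_apply_prod hB hA,
    ← Set.preimage_swap_prod A B, ← Measure.map_apply measurable_swap (hA.prod hB), hsymm]

theorem MeasureTheory.Measure.map_fst_compProd_le (hκ : ∀ x, κ x Set.univ ≤ 1) :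
    (π ⊗ₘ κ).map Prod.fst ≤ π := by
  refine Measure.le_iff.2 fun s hs => ?_
  rw [Measure.map_apply measurable_fst hs, ← Set.prod_univ,
    Measure.compProd_apply_prod hs MeasurableSet.univ]
  calc ∫⁻ x in s, κ x Set.univ ∂π ≤ ∫⁻ _ in s, 1 ∂π := lintegral_mono hκ
    _ = π s := by simp

theorem integrable_mul_compProd (hsymm : (π ⊗ₘ κ).map Prod.swap = π ⊗ₘ κ)
    (hκ : ∀ x, κ x Set.univ ≤ 1) {f : X → ℝ} (hf : MemLp f 2 π) :
    Integrable (fun p => f p.1 * f p.2) (π ⊗ₘ κ) := by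
  have hfst : MemLp (fun p : X × X => f p.1) 2 (π ⊗ₘ κ) :=
    (hf.mono_measure (Measure.map_fst_compProd_le hκ)).comp_of_map measurable_fst.aemeasurable
  have hsnd : MemLp (fun p : X × X => f p.2) 2 (π ⊗ₘ κ) :=
    (hsymm ▸ hfst).comp_of_map measurable_swap.aemeasurable
  exact hfst.integrable_mul hsnd

theorem integral_mul_integral_eq_integral_compProd
    (hsymm : (π ⊗ₘ κ).map Prod.swap = π ⊗ₘ κ) (hκ : ∀ x, κ x Set.univ ≤ 1) {f : X → ℝ}
    (hf : MemLp f 2 π) :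
    ∫ x, f x * ∫ y, f y ∂κ x ∂π = ∫ p, f p.1 * f p.2 ∂(π ⊗ₘ κ) := by
  simp_rw [Measure.integral_compProd (integrable_mul_compProd hsymm hκ hf), integral_const_mul]

theorem mul_ae_eq_compProd_of_ae_eq (hsymm : (π ⊗ₘ κ).map Prod.swap = π ⊗ₘ κ)
    (hκ : ∀ x, κ x Set.univ ≤ 1) {f g : X → ℝ} (hfg : f =ᵐ[π] g) :
    (fun p : X × X => f p.1 * f p.2) =ᵐ[π ⊗ₘ κ] fun p => g p.1 * g p.2 := by
  have hfst : (fun p : X × X => f p.1) =ᵐ[π ⊗ₘ κ] fun p => g p.1 :=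
    (Measure.QuasiMeasurePreserving.mk measurable_fst
      (Measure.absolutelyContinuous_of_le (Measure.map_fst_compProd_le hκ))).ae_eq hfg
  have hsnd : (fun p : X × X => f p.2) =ᵐ[π ⊗ₘ κ] fun p => g p.2 :=
    (MeasurePreserving.mk measurable_swap hsymm).quasiMeasurePreserving.ae_eq hfst
  filter_upwards [hfst, hsnd] with p h1 h2
  rw [h1, h2]

end SymmetricJointLaw

section PairMeasure

variable {X ι : Type*} [Fintype ι]

noncomputable def pairWeight (G : X → ℝ) (l k : ι) (z : ι → X) : ℝ :=
  G (z l) * G (z k) / ∑ j, G (z j)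

theorem pairWeight_comm (G : X → ℝ) (l k : ι) : pairWeight G l k = pairWeight G k l := by
  funext z
  rw [pairWeight, pairWeight, mul_comm]

theorem pairWeight_comp_perm (G : X → ℝ) (σ : Equiv.Perm ι) (l k : ι) (z : ι → X) :
    pairWeight G l k (z ∘ σ) = pairWeight G (σ l) (σ k) z := by
  simp only [pairWeight, Function.comp_apply, Equiv.sum_comp σ fun j => G (z j)]

theorem pairWeight_nonneg {G : X → ℝ} (hG : ∀ x, 0 ≤ G x) (l k : ι) (z : ι → X) :
    0 ≤ pairWeight G l k z :=
  div_nonneg (mul_nonneg (hG _) (hG _)) (Finset.sum_nonneg fun _ _ => hG _)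

theorem sum_sum_pairWeight_mul (G g : X → ℝ) (z : ι → X) :
    ∑ l, ∑ k, pairWeight G l k z * (g (z l) * g (z k))
      = (∑ k, G (z k) * g (z k)) ^ 2 / ∑ j, G (z j) := by
  simp only [pow_two, Finset.sum_mul_sum, Finset.sum_div, pairWeight]
  refine Finset.sum_congr rfl fun l _ => Finset.sum_congr rfl fun k _ => ?_
  ring

variable [MeasurableSpace X]

@[fun_prop]
theorem measurable_pairWeight {G : X → ℝ} (hG : Measurable G) (l k : ι) :
    Measurable (pairWeight G l k) := by
  unfold pairWeight
  fun_prop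

noncomputable def pairMeasure (M : Measure X) (G : X → ℝ) (l k : ι) : Measure (X × X) :=
  ((Measure.pi fun _ : ι => M).withDensity fun z => ENNReal.ofReal (pairWeight G l k z)).map
    fun z => (z l, z k)

variable (M : Measure X) {G : X → ℝ}

theorem lintegral_pairMeasure (hG : Measurable G) (l k : ι) {h : X × X → ℝ≥0∞}
    (hh : Measurable h) :
    ∫⁻ p, h p ∂pairMeasure M G l k
      = ∫⁻ z, ENNReal.ofReal (pairWeight G l k z) * h (z l, z k) ∂Measure.pi fun _ => M := by
  rw [pairMeasure, lintegral_map hh (by fun_prop),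
    lintegral_withDensity_eq_lintegral_mul _ (by fun_prop) (by fun_prop)]
  rfl

theorem pairMeasure_perm [SigmaFinite M] (hG : Measurable G) (σ : Equiv.Perm ι) (l k : ι) :
    pairMeasure M G (σ l) (σ k) = pairMeasure M G l k := by
  refine Measure.ext_of_lintegral _ fun h hh => ?_
  rw [lintegral_pairMeasure M hG _ _ hh, lintegral_pairMeasure M hG _ _ hh]
  conv_rhs => rw [← (measurePreserving_comp_perm M σ).lintegral_comp (by fun_prop)]
  simp only [pairWeight_comp_perm, Function.comp_apply]

theorem pairMeasure_map_swap (G : X → ℝ) (l k : ι) :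
    (pairMeasure M G l k).map Prod.swap = pairMeasure M G k l := by
  rw [pairMeasure, Measure.map_map measurable_swap (by fun_prop), pairWeight_comm]
  rfl

end PairMeasure

section PairMeasureIntegral

variable {X ι : Type*} [Fintype ι] [MeasurableSpace X] (M : Measure X) {G : X → ℝ}

theorem integrable_pairMeasure_iff (hG : Measurable G) (hG0 : ∀ x, 0 ≤ G x) {h : X × X → ℝ}
    (hh : Measurable h) (l k : ι) :
    Integrable h (pairMeasure M G l k)
      ↔ Integrable (fun z => pairWeight G l k z * h (z l, z k)) (Measure.pi fun _ => M) := by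
  rw [pairMeasure, integrable_map_measure hh.aestronglyMeasurable (by fun_prop),
    integrable_withDensity_iff (by fun_prop) (ae_of_all _ fun _ => ENNReal.ofReal_lt_top)]
  simp_rw [ENNReal.toReal_ofReal (pairWeight_nonneg hG0 _ _ _), mul_comm]
  rfl

theorem integral_pairMeasure (hG : Measurable G) (hG0 : ∀ x, 0 ≤ G x) {h : X × X → ℝ}
    (hh : Measurable h) (l k : ι) :
    ∫ p, h p ∂pairMeasure M G l k
      = ∫ z, pairWeight G l k z * h (z l, z k) ∂Measure.pi fun _ => M := by
  rw [pairMeasure, integral_map (by fun_prop) hh.aestronglyMeasurable,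
    integral_withDensity_eq_integral_toReal_smul (by fun_prop)
      (ae_of_all _ fun _ => ENNReal.ofReal_lt_top)]
  simp_rw [ENNReal.toReal_ofReal (pairWeight_nonneg hG0 _ _ _), smul_eq_mul]

theorem integral_mul_sum_sum_pairMeasure_nonneg (hG : Measurable G) (hG0 : ∀ x, 0 ≤ G x)
    {g : X → ℝ} (hg : Measurable g)
    (hint : Integrable (fun p => g p.1 * g p.2) (∑ l : ι, ∑ k : ι, pairMeasure M G l k)) :
    0 ≤ ∫ p, g p.1 * g p.2 ∂∑ l : ι, ∑ k : ι, pairMeasure M G l k := by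
  have hgg : Measurable fun p : X × X => g p.1 * g p.2 := by fun_prop
  have hint' : ∀ l k, Integrable (fun z => pairWeight G l k z * (g (z l) * g (z k)))
      (Measure.pi fun _ => M) := fun l k =>
    (integrable_pairMeasure_iff M hG hG0 hgg l k).1 <| integrable_finsetSum_measure.1
      (integrable_finsetSum_measure.1 hint l (Finset.mem_univ l)) k (Finset.mem_univ k)
  calc (0 : ℝ)
      ≤ ∫ z, (∑ k, G (z k) * g (z k)) ^ 2 / ∑ j, G (z j) ∂Measure.pi fun _ => M :=
        integral_nonneg fun z => div_nonneg (sq_nonneg _) (Finset.sum_nonneg fun _ _ => hG0 _)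
    _ = ∫ z, ∑ l, ∑ k, pairWeight G l k z * (g (z l) * g (z k)) ∂Measure.pi fun _ => M :=
        integral_congr_ae (ae_of_all _ fun z => (sum_sum_pairWeight_mul G g z).symm)
    _ = ∑ l, ∑ k, ∫ z, pairWeight G l k z * (g (z l) * g (z k)) ∂Measure.pi fun _ => M := by
        rw [integral_finsetSum Finset.univ fun l _ =>
          integrable_finsetSum Finset.univ fun k _ => hint' l k]
        exact Finset.sum_congr rfl fun l _ => integral_finsetSum Finset.univ fun k _ => hint' l k
    _ = ∫ p, g p.1 * g p.2 ∂∑ l : ι, ∑ k : ι, pairMeasure M G l k := by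
        rw [integral_finsetSum_measure fun l _ => integrable_finsetSum_measure.1 hint l
          (Finset.mem_univ l)]
        refine Finset.sum_congr rfl fun l _ => ?_
        rw [integral_finsetSum_measure fun k _ => integrable_finsetSum_measure.1
          (integrable_finsetSum_measure.1 hint l (Finset.mem_univ l)) k (Finset.mem_univ k)]
        exact Finset.sum_congr rfl fun k _ => (integral_pairMeasure M hG hG0 hgg l k).symm

variable [SigmaFinite M]

theorem map_swap_sum_pairMeasure (hG : Measurable G) (i : ι) :
    (∑ k, pairMeasure M G i k).map Prod.swap = ∑ k, pairMeasure M G i k := by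
  classical
  rw [← Measure.mapₗ_apply_of_measurable measurable_swap, map_sum]
  refine Finset.sum_congr rfl fun k _ => ?_
  rw [Measure.mapₗ_apply_of_measurable measurable_swap, pairMeasure_map_swap,
    ← pairMeasure_perm M hG (Equiv.swap i k) i k, Equiv.swap_apply_left, Equiv.swap_apply_right]

theorem sum_sum_pairMeasure (hG : Measurable G) (i : ι) :
    ∑ l : ι, ∑ k : ι, pairMeasure M G l k
      = (Fintype.card ι : ℝ≥0∞) • ∑ k, pairMeasure M G i k := by
  classical
  rw [Nat.cast_smul_eq_nsmul, ← Finset.card_univ (α := ι), ← Finset.sum_const]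
  refine Finset.sum_congr rfl fun l _ => ?_
  calc ∑ k, pairMeasure M G l k
      = ∑ k, pairMeasure M G (Equiv.swap i l i) (Equiv.swap i l k) := by
        rw [Equiv.swap_apply_left]
        exact (Equiv.sum_comp (Equiv.swap i l) fun k => pairMeasure M G l k).symm
    _ = ∑ k, pairMeasure M G i k := by simp only [pairMeasure_perm M hG]

theorem integral_mul_sum_pairMeasure_nonneg (hG : Measurable G) (hG0 : ∀ x, 0 ≤ G x)
    {g : X → ℝ} (hg : Measurable g) (i : ι)
    (hint : Integrable (fun p => g p.1 * g p.2) (∑ k, pairMeasure M G i k)) :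
    0 ≤ ∫ p, g p.1 * g p.2 ∂∑ k, pairMeasure M G i k := by
  have hsum := sum_sum_pairMeasure M hG i
  have hnonneg := integral_mul_sum_sum_pairMeasure_nonneg M hG hG0 hg
    (hsum ▸ hint.smul_measure (ENNReal.natCast_ne_top _))
  rw [hsum, integral_smul_measure, smul_eq_mul, ENNReal.toReal_natCast] at hnonneg
  exact nonneg_of_mul_nonneg_right hnonneg (Nat.cast_pos.2 (Fintype.card_pos_iff.2 ⟨i⟩))

end PairMeasureIntegral

section IsirKernel

variable {X : Type*} [MeasurableSpace X]

theorem piFinSuccAbove_zero_symm_eq_isirVec (n : ℕ) :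
    ⇑(MeasurableEquiv.piFinSuccAbove (fun _ : Fin (n + 2) => X) 0).symm
      = fun p : X × (Fin (n + 1) → X) => isirVec n p.1 p.2 := by
  funext p
  simp [MeasurableEquiv.piFinSuccAbove, isirVec, Fin.consEquiv]

@[fun_prop]
theorem measurable_isirVec (n : ℕ) :
    Measurable fun p : X × (Fin (n + 1) → X) => isirVec n p.1 p.2 := by
  rw [← piFinSuccAbove_zero_symm_eq_isirVec]
  exact MeasurableEquiv.measurable _


variable (M : Measure X) (n : ℕ)

theorem measurePreserving_isirVec [SigmaFinite M] :
    MeasurePreserving (fun p : X × (Fin (n + 1) → X) => isirVec n p.1 p.2)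
      (M.prod (Measure.pi fun _ => M)) (Measure.pi fun _ => M) := by
  rw [← piFinSuccAbove_zero_symm_eq_isirVec]
  exact (measurePreserving_piFinSuccAbove (fun _ : Fin (n + 2) => M) 0).symm

theorem lintegral_lintegral_isirVec [SigmaFinite M] {F : (Fin (n + 2) → X) → ℝ≥0∞}
    (hF : Measurable F) :
    ∫⁻ x, ∫⁻ y, F (isirVec n x y) ∂Measure.pi (fun _ => M) ∂M
      = ∫⁻ z, F z ∂Measure.pi fun _ => M := by
  rw [← lintegral_prod (fun p => F (isirVec n p.1 p.2)) (by fun_prop),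
    (measurePreserving_isirVec M n).lintegral_comp hF]

variable {G : X → ℝ}

theorem lintegral_isirKernel (hG : Measurable G) (x : X) {h : X → ℝ≥0∞}
    (hh : Measurable h) :
    ∫⁻ y, h y ∂isirKernel M G n x = ∑ k, ∫⁻ y,
      ENNReal.ofReal (G (isirVec n x y k) / ∑ j, G (isirVec n x y j)) * h (isirVec n x y k)
        ∂Measure.pi fun _ => M := by
  rw [isirKernel, lintegral_finsetSum_measure]
  refine Finset.sum_congr rfl fun k _ => ?_
  rw [lintegral_map hh (by fun_prop),
    lintegral_withDensity_eq_lintegral_mul _ (by fun_prop) (by fun_prop)]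
  rfl

theorem measurable_isirKernel [SigmaFinite M] (hG : Measurable G) :
    Measurable (isirKernel M G n) := by
  refine Measure.measurable_of_measurable_coe _ fun s hs => ?_
  simp_rw [← lintegral_indicator_one hs,
    lintegral_isirKernel M n hG _ (measurable_one.indicator hs)]
  exact Finset.measurable_sum _ fun k _ => by fun_prop

theorem isirKernel_univ_le_one [IsProbabilityMeasure M] (hG : Measurable G)
    (hG0 : ∀ x, 0 ≤ G x) (x : X) : isirKernel M G n x Set.univ ≤ 1 := by
  rw [← lintegral_one, lintegral_isirKernel M n hG x measurable_const,
    ← lintegral_finsetSum _ fun k _ => by fun_prop]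
  calc ∫⁻ y, ∑ k, ENNReal.ofReal (G (isirVec n x y k) / ∑ j, G (isirVec n x y j)) * 1
          ∂(Measure.pi fun _ => M)
      ≤ ∫⁻ _, 1 ∂(Measure.pi fun _ => M) := lintegral_mono fun y => ?_
    _ = 1 := by simp
  simp only [mul_one]
  rw [← ENNReal.ofReal_sum_of_nonneg fun k _ => div_nonneg (hG0 _)
    (Finset.sum_nonneg fun _ _ => hG0 _), ← Finset.sum_div]
  exact ENNReal.ofReal_le_one.2 (div_self_le_one _)

end IsirKernel

namespace ProbabilityTheory.Kernel

variable {X : Type*} [MeasurableSpace X]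

noncomputable def isir (M : Measure X) [SigmaFinite M] {G : X → ℝ} (n : ℕ)
    (hG : Measurable G) : Kernel X X :=
  ⟨isirKernel M G n, measurable_isirKernel M n hG⟩

theorem isir_apply (M : Measure X) [SigmaFinite M] {G : X → ℝ} (n : ℕ) (hG : Measurable G)
    (x : X) : isir M n hG x = isirKernel M G n x := rfl

variable (M : Measure X) [IsProbabilityMeasure M] {G : X → ℝ} (n : ℕ)

theorem isFiniteKernel_isir (hG : Measurable G) (hG0 : ∀ x, 0 ≤ G x) :
    IsFiniteKernel (isir M n hG) :=
  ⟨⟨1, ENNReal.one_lt_top, isirKernel_univ_le_one M n hG hG0⟩⟩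

/-- Under `π ⊗ₘ P_N` the current state is particle `0` and the new state the selected
particle `k`. -/
theorem withDensity_compProd_isir (hG : Measurable G)
    (hG0 : ∀ x, 0 ≤ G x) :
    (M.withDensity fun x => ENNReal.ofReal (G x)) ⊗ₘ isir M n hG
      = ∑ k : Fin (n + 2), pairMeasure M G 0 k := by
  have := isFiniteKernel_isir M n hG hG0
  refine Measure.ext_of_lintegral _ fun h hh => ?_
  rw [Measure.lintegral_compProd hh, lintegral_finsetSum_measure,
    lintegral_withDensity_eq_lintegral_mul _ (by fun_prop) hh.lintegral_kernel_prod_right']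
  calc ∫⁻ x, ENNReal.ofReal (G x) * ∫⁻ y, h (x, y) ∂isir M n hG x ∂M
      = ∫⁻ x, ∑ k : Fin (n + 2), ∫⁻ y, ENNReal.ofReal (pairWeight G 0 k (isirVec n x y))
          * h (isirVec n x y 0, isirVec n x y k) ∂(Measure.pi fun _ => M) ∂M := by
        refine lintegral_congr fun x => ?_
        rw [isir_apply, lintegral_isirKernel M n hG x (by fun_prop), Finset.mul_sum]
        refine Finset.sum_congr rfl fun k _ => ?_
        rw [← lintegral_const_mul _ (by fun_prop)]
        refine lintegral_congr fun y => ?_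
        rw [← mul_assoc, ← ENNReal.ofReal_mul (hG0 x), pairWeight, mul_div_assoc]
        rfl
    _ = ∑ k : Fin (n + 2), ∫⁻ p, h p ∂pairMeasure M G 0 k := by
        rw [lintegral_finsetSum _ fun k _ => by fun_prop]
        refine Finset.sum_congr rfl fun k _ => ?_
        rw [lintegral_pairMeasure M hG 0 k hh]
        exact lintegral_lintegral_isirVec M n
          (F := fun z => ENNReal.ofReal (pairWeight G 0 k z) * h (z 0, z k)) (by fun_prop)

theorem map_swap_withDensity_compProd_isir (hG : Measurable G) (hG0 : ∀ x, 0 ≤ G x) :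
    ((M.withDensity fun x => ENNReal.ofReal (G x)) ⊗ₘ isir M n hG).map Prod.swap
      = (M.withDensity fun x => ENNReal.ofReal (G x)) ⊗ₘ isir M n hG := by
  rw [withDensity_compProd_isir M n hG hG0, map_swap_sum_pairMeasure M hG]

end ProbabilityTheory.Kernel

theorem isir_reversible_and_positive_general {X : Type*} [MeasurableSpace X]
    (M π : Measure X) [IsProbabilityMeasure M]
    (G : X → ℝ) (hGmeas : Measurable G) (hGnonneg : ∀ x, 0 ≤ G x)
    (hGrn : ∀ A : Set X, MeasurableSet A → π A = ∫⁻ x in A, ENNReal.ofReal (G x) ∂M)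
    (n : ℕ) :
    (∀ A B : Set X, MeasurableSet A → MeasurableSet B →
      ∫⁻ x in A, isirKernel M G n x B ∂π = ∫⁻ x in B, isirKernel M G n x A ∂π) ∧
    (∀ f : X → ℝ, MemLp f 2 π →
      0 ≤ ∫ x, f x * ∫ y, f y ∂(isirKernel M G n x) ∂π) := by
  obtain rfl : π = M.withDensity fun x => ENNReal.ofReal (G x) :=
    Measure.ext fun s hs => by rw [hGrn s hs, withDensity_apply _ hs]
  have := Kernel.isFiniteKernel_isir M n hGmeas hGnonneg
  have hsymm := Kernel.map_swap_withDensity_compProd_isir M n hGmeas hGnonneg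
  have hκ := isirKernel_univ_le_one M n hGmeas hGnonneg
  refine ⟨Kernel.isReversible_of_map_swap_compProd hsymm, fun f hf => ?_⟩
  obtain ⟨g, hg, hfg⟩ := hf.aestronglyMeasurable
  have hquad := integral_mul_integral_eq_integral_compProd hsymm hκ hf
  simp only [Kernel.isir_apply] at hquad
  rw [hquad, integral_congr_ae (mul_ae_eq_compProd_of_ae_eq hsymm hκ hfg)]
  have hint := integrable_mul_compProd hsymm hκ (hf.ae_eq hfg)
  rw [Kernel.withDensity_compProd_isir M n hGmeas hGnonneg] at hint ⊢
  exact integral_mul_sum_pairMeasure_nonneg M hGmeas hGnonneg hg.measurable 0 hint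

/-- The i-SIR kernel `P_N` is reversible with respect to `π` and is a positive operator
on `L²(X, π)`. -/
theorem isir_reversible_and_positive {X : Type*} [MeasurableSpace X]
    (M π : Measure X) [IsProbabilityMeasure M] [IsProbabilityMeasure π]
    (hac : π ≪ M)
    (G : X → ℝ) (hGmeas : Measurable G) (hGnonneg : ∀ x, 0 ≤ G x)
    (hGrn : ∀ A : Set X, MeasurableSet A → π A = ∫⁻ x in A, ENNReal.ofReal (G x) ∂M)
    (n : ℕ) :
    (∀ A B : Set X, MeasurableSet A → MeasurableSet B →
      ∫⁻ x in A, isirKernel M G n x B ∂π = ∫⁻ x in B, isirKernel M G n x A ∂π) ∧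
    (∀ f : X → ℝ, MemLp f 2 π →
      0 ≤ ∫ x, f x * ∫ y, f y ∂(isirKernel M G n x) ∂π) :=
  isir_reversible_and_positive_general M π G hGmeas hGnonneg hGrn n
end

section
/- If Ḡ := sup_{x∈X} G(x) < ∞, then for every N ≥ 2, every x ∈ X and every S ∈ B(X), the i-SIR kernel satisfies the uniform minorization P_N(x,S) ≥ ((N−1)/(2Ḡ + N − 2)) · π(S). -/
open MeasureTheory
open scoped ENNReal

/-!
Fix one of the `N - 1` fresh particles, say `z^k = t`. Its selection weight
`G t / (G x + G t + Σ_{j ≠ 1, k} G (z^j))` is a convex function of the sum over the other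
fresh particles, whose mean is `N - 2` because `∫ G dM = 1`. By Jensen's inequality for `u ↦ 1/u`
its conditional expectation is at least `G t / (G x + G t + N - 2) ≥ G t / (2Ḡ + N - 2)`.
Integrating over `t ∈ S` against `M` gives `π(S) / (2Ḡ + N - 2)` for each fresh particle, and the
term of the current state `x` is dropped.
-/

theorem lintegral_pi_eq_lintegral_insertNth {m : ℕ} {α : Fin (m + 1) → Type*}
    [∀ i, MeasurableSpace (α i)] (μ : ∀ i, Measure (α i)) [∀ i, SigmaFinite (μ i)]
    (i : Fin (m + 1)) {F : (∀ j, α j) → ℝ≥0∞} (hF : Measurable F) :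
    ∫⁻ y, F y ∂Measure.pi μ =
      ∫⁻ t, ∫⁻ r, F (i.insertNth t r) ∂Measure.pi (fun j => μ (i.succAbove j)) ∂μ i := by
  have e := (measurePreserving_piFinSuccAbove μ i).symm
  rw [← e.lintegral_comp hF]
  exact lintegral_prod _ (hF.comp e.measurable).aemeasurable

theorem two_div_sub_div_sq_le_inv {c u : ℝ} (hc : 0 < c) (hu : 0 < u) :
    2 / c - u / c ^ 2 ≤ u⁻¹ := by
  rw [div_sub_div _ _ hc.ne' (by positivity), ← one_div, div_le_div_iff₀ (by positivity) hu]
  nlinarith [sq_nonneg (u - c)]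

theorem integrable_inv_of_le {Ω : Type*} [MeasurableSpace Ω] {μ : Measure Ω}
    [IsFiniteMeasure μ] {f : Ω → ℝ} {b : ℝ} (hb : 0 < b) (hfb : ∀ ω, b ≤ f ω)
    (hf : AEMeasurable f μ) :
    Integrable (fun ω => (f ω)⁻¹) μ := by
  refine .of_bound hf.inv.aestronglyMeasurable b⁻¹ (ae_of_all _ fun ω => ?_)
  rw [Real.norm_of_nonneg (inv_nonneg.2 (hb.le.trans (hfb ω)))]
  exact inv_anti₀ hb (hfb ω)

/-- Jensen's inequality for `u ↦ u⁻¹`, proved by integrating its tangent line at `∫ f`. -/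
theorem inv_integral_le_integral_inv {Ω : Type*} [MeasurableSpace Ω] {μ : Measure Ω}
    [IsProbabilityMeasure μ] {f : Ω → ℝ} {b : ℝ} (hb : 0 < b) (hfb : ∀ ω, b ≤ f ω)
    (hf : Integrable f μ) :
    (∫ ω, f ω ∂μ)⁻¹ ≤ ∫ ω, (f ω)⁻¹ ∂μ := by
  set c := ∫ ω, f ω ∂μ
  have hc : 0 < c := hb.trans_le <| by simpa using integral_mono (integrable_const b) hf hfb
  have hf_inv := integrable_inv_of_le hb hfb hf.aemeasurable
  have htangent : Integrable (fun ω => 2 / c - f ω / c ^ 2) μ :=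
    (integrable_const _).sub (hf.div_const _)
  calc c⁻¹ = ∫ ω, (2 / c - f ω / c ^ 2) ∂μ := by
        rw [integral_sub (integrable_const _) (hf.div_const _), integral_const, integral_div,
          show ∫ ω, f ω ∂μ = c from rfl]
        simp only [probReal_univ, smul_eq_mul, one_mul]
        field_simp
        ring
    _ ≤ ∫ ω, (f ω)⁻¹ ∂μ :=
        integral_mono htangent hf_inv fun ω => two_div_sub_div_sq_le_inv hc (hb.trans_le (hfb ω))

theorem integral_sum_comp_eval {X : Type*} [MeasurableSpace X] {M : Measure X}
    [IsProbabilityMeasure M] {G : X → ℝ} (hG : Integrable G M) (m : ℕ) :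
    ∫ r : Fin m → X, ∑ i, G (r i) ∂Measure.pi (fun _ => M) = m * ∫ z, G z ∂M := by
  rw [integral_finsetSum _ fun i _ => integrable_comp_eval hG]
  simp [integral_comp_eval (μ := fun _ : Fin m => M) hG.aestronglyMeasurable]

/-- The `k`-th summand of `isirKernel`: the law of the selected particle on the event that
particle `k` is selected. -/
noncomputable def isirComponent {X : Type*} [MeasurableSpace X] (M : Measure X) (G : X → ℝ)
    (n : ℕ) (x : X) (k : Fin (n + 2)) : Measure X :=
  Measure.map (fun y : Fin (n + 1) → X => isirVec n x y k)
    ((Measure.pi fun _ : Fin (n + 1) => M).withDensity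
      (fun y => ENNReal.ofReal (G (isirVec n x y k) / ∑ j : Fin (n + 2), G (isirVec n x y j))))

theorem isirKernel_eq_sum_isirComponent {X : Type*} [MeasurableSpace X] (M : Measure X)
    (G : X → ℝ) (n : ℕ) (x : X) :
    isirKernel M G n x = ∑ k, isirComponent M G n x k := rfl

section Isir

variable {X : Type*} [MeasurableSpace X] {M : Measure X} [IsProbabilityMeasure M] {G : X → ℝ}

theorem ofReal_inv_add_le_lintegral_inv_add_sum (hG0 : ∀ z, 0 ≤ G z) (hG : Integrable G M)
    {b : ℝ} (hb : 0 < b) (m : ℕ) :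
    ENNReal.ofReal (b + m * ∫ z, G z ∂M)⁻¹ ≤
      ∫⁻ r : Fin m → X, ENNReal.ofReal (b + ∑ i, G (r i))⁻¹ ∂Measure.pi (fun _ => M) := by
  have hsum : Integrable (fun r : Fin m → X => ∑ i, G (r i)) (Measure.pi fun _ => M) :=
    integrable_finsetSum _ fun i _ => integrable_comp_eval (μ := fun _ : Fin m => M) hG
  have hf := (integrable_const b).add hsum
  have hmean :
      ∫ r : Fin m → X, (b + ∑ i, G (r i)) ∂Measure.pi (fun _ => M) = b + m * ∫ z, G z ∂M := by
    rw [integral_add (integrable_const b) hsum, integral_sum_comp_eval hG]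
    simp
  have hfb : ∀ r : Fin m → X, b ≤ b + ∑ i, G (r i) :=
    fun r => le_add_of_nonneg_right (Finset.sum_nonneg fun i _ => hG0 _)
  rw [← hmean, ← ofReal_integral_eq_lintegral_ofReal]
  · exact ENNReal.ofReal_le_ofReal (inv_integral_le_integral_inv hb hfb hf)
  · exact integrable_inv_of_le hb hfb hf.aemeasurable
  · exact ae_of_all _ fun r => inv_nonneg.2 (hb.le.trans (hfb r))

theorem isirComponent_succ_apply (hG : Measurable G) {n : ℕ} (x : X) (k : Fin (n + 1))
    {S : Set X} (hS : MeasurableSet S) :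
    isirComponent M G n x k.succ S =
      ∫⁻ t in S, ∫⁻ r : Fin n → X,
        ENNReal.ofReal (G t / (G x + G t + ∑ j, G (r j))) ∂Measure.pi (fun _ => M) ∂M := by
  simp only [isirComponent, isirVec, Fin.sum_univ_succ (n := n + 1), Fin.cons_zero, Fin.cons_succ]
  rw [Measure.map_apply (measurable_pi_apply k) hS,
    withDensity_apply _ (measurable_pi_apply k hS),
    ← lintegral_indicator (measurable_pi_apply k hS),
    lintegral_pi_eq_lintegral_insertNth _ k
      ((by fun_prop : Measurable _).indicator (measurable_pi_apply k hS)), ← lintegral_indicator hS]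
  refine lintegral_congr fun t => ?_
  by_cases ht : t ∈ S
  · simp [ht, Fin.sum_univ_succAbove _ k, add_assoc]
  · simp [ht]

theorem ofReal_div_le_lintegral_div_add_sum (hG0 : ∀ z, 0 ≤ G z) (hGint : Integrable G M)
    (hG1 : ∫ z, G z ∂M = 1) {B : ℝ} (hGB : ∀ z, G z ≤ B) (m : ℕ) (x t : X) :
    ENNReal.ofReal (G t / (2 * B + m)) ≤
      ∫⁻ r : Fin m → X, ENNReal.ofReal (G t / (G x + G t + ∑ j, G (r j)))
        ∂Measure.pi (fun _ => M) := by
  rcases (hG0 t).eq_or_lt with ht | ht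
  · simp [← ht]
  have hb : 0 < G x + G t := by linarith [hG0 x]
  calc ENNReal.ofReal (G t / (2 * B + m))
      ≤ ENNReal.ofReal (G t) * ENNReal.ofReal (G x + G t + m * ∫ z, G z ∂M)⁻¹ := by
        rw [hG1, mul_one, ← ENNReal.ofReal_mul ht.le, ← div_eq_mul_inv]
        gcongr
        linarith [hGB x, hGB t]
    _ ≤ ENNReal.ofReal (G t) *
          ∫⁻ r : Fin m → X, ENNReal.ofReal (G x + G t + ∑ j, G (r j))⁻¹
            ∂Measure.pi (fun _ => M) := by
        gcongr
        exact ofReal_inv_add_le_lintegral_inv_add_sum hG0 hGint hb m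
    _ = _ := by
        rw [← lintegral_const_mul' _ _ ENNReal.ofReal_ne_top]
        simp_rw [← ENNReal.ofReal_mul ht.le, div_eq_mul_inv]

theorem ofReal_inv_mul_setLIntegral_le_isirComponent_succ (hG : Measurable G)
    (hG0 : ∀ z, 0 ≤ G z) (hGint : Integrable G M) (hG1 : ∫ z, G z ∂M = 1) {B : ℝ}
    (hGB : ∀ z, G z ≤ B) {n : ℕ} (x : X) (k : Fin (n + 1)) {S : Set X} (hS : MeasurableSet S) :
    ENNReal.ofReal (2 * B + n)⁻¹ * ∫⁻ t in S, ENNReal.ofReal (G t) ∂M ≤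
      isirComponent M G n x k.succ S := by
  rw [isirComponent_succ_apply hG x k hS, ← lintegral_const_mul _ hG.ennreal_ofReal]
  refine lintegral_mono fun t => ?_
  rw [mul_comm, ← ENNReal.ofReal_mul (hG0 t), ← div_eq_mul_inv]
  exact ofReal_div_le_lintegral_div_add_sum hG0 hGint hG1 hGB n x t

end Isir

theorem isir_uniform_minorization_general {X : Type*} [MeasurableSpace X]
    (M π : Measure X) [IsProbabilityMeasure M] [IsProbabilityMeasure π]
    (G : X → ℝ) (hGmeas : Measurable G) (hGnonneg : ∀ x, 0 ≤ G x)
    (hGrn : ∀ A : Set X, MeasurableSet A → π A = ∫⁻ x in A, ENNReal.ofReal (G x) ∂M)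
    (hGbdd : BddAbove (Set.range G))
    (n : ℕ) (x : X) (S : Set X) (hS : MeasurableSet S) :
    ENNReal.ofReal (((n : ℝ) + 1) / (2 * (⨆ z, G z) + n)) * π S ≤ isirKernel M G n x S := by
  set B := ⨆ z, G z
  have hGB : ∀ z, G z ≤ B := le_ciSup hGbdd
  have hGint : Integrable G M := .of_bound hGmeas.aestronglyMeasurable B <|
    ae_of_all _ fun z => by rw [Real.norm_of_nonneg (hGnonneg z)]; exact hGB z
  have hG1 : ∫ z, G z ∂M = 1 := by
    have h := hGrn .univ .univ
    rw [measure_univ, Measure.restrict_univ,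
      ← ofReal_integral_eq_lintegral_ofReal hGint (ae_of_all _ hGnonneg)] at h
    exact ENNReal.ofReal_eq_one.1 h.symm
  calc ENNReal.ofReal (((n : ℝ) + 1) / (2 * B + n)) * π S
      = ∑ _k : Fin (n + 1), ENNReal.ofReal (2 * B + n)⁻¹ * π S := by
        rw [Finset.sum_const, Finset.card_univ, Fintype.card_fin, nsmul_eq_mul, ← mul_assoc,
          div_eq_mul_inv, ENNReal.ofReal_mul (by positivity)]
        norm_cast
    _ ≤ ∑ k : Fin (n + 1), isirComponent M G n x k.succ S := by
        gcongr with k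
        rw [hGrn S hS]
        exact ofReal_inv_mul_setLIntegral_le_isirComponent_succ hGmeas hGnonneg hGint hG1 hGB
          x k hS
    _ ≤ ∑ k, isirComponent M G n x k S := by
        rw [Fin.sum_univ_succ _ (n := n + 1)]
        exact le_add_self
    _ = isirKernel M G n x S := by
        rw [isirKernel_eq_sum_isirComponent, Measure.finsetSum_apply]

/-- If `Ḡ = sup_x G(x) < ∞` then the i-SIR kernel with `N = n + 2 ≥ 2` particles satisfies the
uniform minorization `P_N(x, S) ≥ ((N - 1)/(2Ḡ + N - 2)) ⬝ π(S)`. -/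
theorem isir_uniform_minorization {X : Type*} [MeasurableSpace X]
    (M π : Measure X) [IsProbabilityMeasure M] [IsProbabilityMeasure π]
    (hac : π ≪ M)
    (G : X → ℝ) (hGmeas : Measurable G) (hGnonneg : ∀ x, 0 ≤ G x)
    (hGrn : ∀ A : Set X, MeasurableSet A → π A = ∫⁻ x in A, ENNReal.ofReal (G x) ∂M)
    (hGbdd : BddAbove (Set.range G))
    (n : ℕ) (x : X) (S : Set X) (hS : MeasurableSet S) :
    ENNReal.ofReal (((n : ℝ) + 1) / (2 * (⨆ z, G z) + n)) * π S ≤ isirKernel M G n x S :=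
  isir_uniform_minorization_general M π G hGmeas hGnonneg hGrn hGbdd n x S hS
end

section
/- Let μ be a probability measure on (E, B(E)) and Π a Markov kernel on E reversible with respect to μ. Assume there exists ε > 0 such that Π(x,A) ≥ ε μ(A) for all x ∈ E and A ∈ B(E). Then for every f ∈ L²(E,μ) the Dirichlet form satisfies ε · var_μ(f) ≤ E_Π(f) ≤ (2−ε) · var_μ(f); consequently the right and left spectral gaps satisfy min{Gap(Π), Gap_L(Π)} ≥ ε. -/
open MeasureTheory ProbabilityTheory
open scoped ENNReal

/-- The Dirichlet form `E_K(f) = ∫ f (f - Kf) dμ` of a Markov transition `K`. -/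
noncomputable def dform {α : Type*} [MeasurableSpace α]
    (μ : Measure α) (K : α → Measure α) (f : α → ℝ) : ℝ :=
  ∫ x, f x * (f x - ∫ y, f y ∂(K x)) ∂μ

/-- The variance of `f` under `μ`: `var_μ(f) = μ(f²) - μ(f)²`. -/
noncomputable def varF {α : Type*} [MeasurableSpace α] (μ : Measure α) (f : α → ℝ) : ℝ :=
  (∫ x, f x ^ 2 ∂μ) - (∫ x, f x ∂μ) ^ 2

/-- The right spectral gap `Gap(K) = inf {E_K(f)/var_μ(f) : f ∈ L²(μ), var_μ(f) > 0}`
(valued in `[0, ∞]`, with the convention `inf ∅ = ∞`). -/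
noncomputable def gapE {α : Type*} [MeasurableSpace α]
    (μ : Measure α) (K : α → Measure α) : ℝ≥0∞ :=
  sInf {r : ℝ≥0∞ | ∃ f : α → ℝ, MemLp f 2 μ ∧ 0 < varF μ f ∧
    r = ENNReal.ofReal (dform μ K f / varF μ f)}

/-- The left spectral gap `Gap_L(K) = 2 - sup {E_K(f)/var_μ(f) : f ∈ L²(μ), var_μ(f) > 0}`. -/
noncomputable def gapLE {α : Type*} [MeasurableSpace α]
    (μ : Measure α) (K : α → Measure α) : ℝ≥0∞ :=
  2 - sSup {r : ℝ≥0∞ | ∃ f : α → ℝ, MemLp f 2 μ ∧ 0 < varF μ f ∧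
    r = ENNReal.ofReal (dform μ K f / varF μ f)}

/-!
Reversibility makes `μ` invariant, so `μ ⊗ₘ Π` is a coupling of `μ` with itself and
`E_Π(f) = μ(f²) - ∫ f(x) f(y) d(μ ⊗ₘ Π)`. Minorization says `μ ⊗ₘ Π ≥ ε (μ ⊗ μ)`, so the integral
of a nonnegative function against `μ ⊗ₘ Π` is at least `ε` times its integral against `μ ⊗ μ`.
For `(f(x) - f(y))²` this reads `2 E_Π(f) ≥ 2ε var_μ(f)`; for `(f(x) + f(y) - 2μ(f))²` it reads
`4 var_μ(f) - 2 E_Π(f) ≥ 2ε var_μ(f)`. Testing minorization on `E` gives `ε ≤ 1`, which the left gap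
needs because `ℝ≥0∞`-subtraction truncates.
-/

section

variable {α β G : Type*} [MeasurableSpace α] [MeasurableSpace β] [NormedAddCommGroup G]
  [NormedSpace ℝ G]

lemma MeasureTheory.Measure.integrable_integral_compProd {μ : Measure α} [SFinite μ]
    {κ : Kernel α β} [IsSFiniteKernel κ] {F : α × β → G} (hF : Integrable F (μ ⊗ₘ κ)) :
    Integrable (fun x => ∫ y, F (x, y) ∂κ x) μ := by
  simpa [Measure.compProd] using hF.integral_compProd

lemma MeasureTheory.Measure.measurePreserving_fst_compProd (μ : Measure α) [SFinite μ]
    (κ : Kernel α β) [IsMarkovKernel κ] : MeasurePreserving Prod.fst (μ ⊗ₘ κ) μ :=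
  ⟨measurable_fst, Measure.fst_compProd μ κ⟩

lemma ProbabilityTheory.Kernel.Invariant.measurePreserving_snd_compProd {μ : Measure α}
    [SFinite μ] {κ : Kernel α α} [IsSFiniteKernel κ] (h : κ.Invariant μ) :
    MeasurePreserving Prod.snd (μ ⊗ₘ κ) μ :=
  ⟨measurable_snd, by rw [← Measure.snd, Measure.snd_compProd]; exact h⟩

lemma MeasureTheory.MeasurePreserving.integral_comp_of_aestronglyMeasurable {ρ : Measure β}
    {μ : Measure α} {π : β → α} (hπ : MeasurePreserving π ρ μ) {g : α → G}
    (hg : AEStronglyMeasurable g μ) :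
    ∫ p, g (π p) ∂ρ = ∫ x, g x ∂μ := by
  rw [← hπ.map_eq] at hg ⊢
  exact (integral_map hπ.measurable.aemeasurable hg).symm

lemma MeasureTheory.Measure.smul_prod_le_compProd {μ : Measure α} [SFinite μ] {ν : Measure β}
    [SFinite ν] {κ : Kernel α β} [IsSFiniteKernel κ] {c : ℝ≥0∞} (h : ∀ x, c • ν ≤ κ x) :
    c • μ.prod ν ≤ μ ⊗ₘ κ := by
  refine Measure.le_iff.2 fun s hs => ?_
  rw [Measure.smul_apply, smul_eq_mul, Measure.prod_apply hs, Measure.compProd_apply hs,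
    ← lintegral_const_mul c (measurable_measure_prodMk_left hs)]
  exact lintegral_mono fun x => by
    simpa using Measure.le_iff.1 (h x) _ (measurable_prodMk_left hs)

lemma mul_integral_prod_le_integral_compProd {μ : Measure α} [SFinite μ] {ν : Measure β}
    [SFinite ν] {κ : Kernel α β} [IsSFiniteKernel κ] {ε : ℝ} (hε : 0 ≤ ε)
    (h : ∀ x, ENNReal.ofReal ε • ν ≤ κ x) {φ : α × β → ℝ} (hφ : 0 ≤ φ)
    (hφi : Integrable φ (μ ⊗ₘ κ)) :
    ε * ∫ p, φ p ∂μ.prod ν ≤ ∫ p, φ p ∂(μ ⊗ₘ κ) := by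
  have := integral_mono_measure (Measure.smul_prod_le_compProd h) (ae_of_all _ hφ) hφi
  rwa [integral_smul_measure, ENNReal.toReal_ofReal hε, smul_eq_mul] at this

lemma le_one_of_ofReal_smul_le {ν μ : Measure α} [IsProbabilityMeasure ν]
    [IsProbabilityMeasure μ] {ε : ℝ} (h : ENNReal.ofReal ε • ν ≤ μ) : ε ≤ 1 := by
  simpa using Measure.le_iff'.1 h Set.univ

end

section

variable {E : Type*} [MeasurableSpace E] {μ : Measure E} {f : E → ℝ}

lemma integral_sq_affine_of_marginals {ρ : Measure (E × E)} [IsProbabilityMeasure ρ]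
    (h₁ : MeasurePreserving Prod.fst ρ μ) (h₂ : MeasurePreserving Prod.snd ρ μ)
    (hf : MemLp f 2 μ) (a b c : ℝ) :
    ∫ p, (a * f p.1 + b * f p.2 + c) ^ 2 ∂ρ =
      (a ^ 2 + b ^ 2) * ∫ x, f x ^ 2 ∂μ + 2 * a * b * ∫ p, f p.1 * f p.2 ∂ρ +
        2 * (a + b) * c * ∫ x, f x ∂μ + c ^ 2 := by
  have hu : MemLp (fun p => f p.1) 2 ρ := hf.comp_measurePreserving h₁
  have hv : MemLp (fun p => f p.2) 2 ρ := hf.comp_measurePreserving h₂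
  have hsq₁ : ∫ p, f p.1 ^ 2 ∂ρ = ∫ x, f x ^ 2 ∂μ :=
    h₁.integral_comp_of_aestronglyMeasurable hf.integrable_sq.1
  have hsq₂ : ∫ p, f p.2 ^ 2 ∂ρ = ∫ x, f x ^ 2 ∂μ :=
    h₂.integral_comp_of_aestronglyMeasurable hf.integrable_sq.1
  have hm₁ : ∫ p, f p.1 ∂ρ = ∫ x, f x ∂μ := h₁.integral_comp_of_aestronglyMeasurable hf.1
  have hm₂ : ∫ p, f p.2 ∂ρ = ∫ x, f x ∂μ := h₂.integral_comp_of_aestronglyMeasurable hf.1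
  have huv : Integrable (fun p => f p.1 * f p.2) ρ := hu.integrable_mul hv
  have hexp : (fun p : E × E => (a * f p.1 + b * f p.2 + c) ^ 2) = fun p =>
      a ^ 2 * f p.1 ^ 2 + b ^ 2 * f p.2 ^ 2 + 2 * a * b * (f p.1 * f p.2) +
        2 * a * c * f p.1 + 2 * b * c * f p.2 + c ^ 2 := by
    ext p; ring
  have hu1 := hu.integrable one_le_two
  have hv1 := hv.integrable one_le_two
  have hu2 := hu.integrable_sq
  have hv2 := hv.integrable_sq
  rw [hexp, integral_add, integral_add, integral_add, integral_add, integral_add]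
  all_goals try apply_rules [Integrable.add, Integrable.const_mul, integrable_const]
  simp only [integral_const_mul, integral_const, hsq₁, hsq₂, hm₁, hm₂, probReal_univ, one_smul]
  ring

variable [IsProbabilityMeasure μ] {P : Kernel E E} [IsMarkovKernel P]

lemma dform_eq_integral_sq_sub_integral_compProd (hP : P.Invariant μ) (hf : MemLp f 2 μ) :
    dform μ P f = ∫ x, f x ^ 2 ∂μ - ∫ p, f p.1 * f p.2 ∂(μ ⊗ₘ P) := by
  have hF : Integrable (fun p => f p.1 * f p.2) (μ ⊗ₘ P) :=
    (hf.comp_measurePreserving (Measure.measurePreserving_fst_compProd μ P)).integrable_mul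
      (hf.comp_measurePreserving hP.measurePreserving_snd_compProd)
  have hPf : Integrable (fun x => f x * ∫ y, f y ∂P x) μ := by
    simpa only [integral_const_mul] using Measure.integrable_integral_compProd hF
  simp only [dform, mul_sub, ← sq]
  rw [integral_sub hf.integrable_sq hPf, Measure.integral_compProd hF]
  simp only [integral_const_mul]

theorem dform_bounds_of_minorization (hP : P.Invariant μ) {ε : ℝ} (hε : 0 ≤ ε)
    (hmin : ∀ x, ENNReal.ofReal ε • μ ≤ P x) (hf : MemLp f 2 μ) :
    ε * varF μ f ≤ dform μ P f ∧ dform μ P f ≤ (2 - ε) * varF μ f := by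
  have hfst := Measure.measurePreserving_fst_compProd μ P
  have hsnd := hP.measurePreserving_snd_compProd
  have compare (a b c : ℝ) :
      ε * ∫ p, (a * f p.1 + b * f p.2 + c) ^ 2 ∂μ.prod μ ≤
        ∫ p, (a * f p.1 + b * f p.2 + c) ^ 2 ∂(μ ⊗ₘ P) := by
    refine mul_integral_prod_le_integral_compProd hε hmin (fun p => sq_nonneg _) ?_
    exact (((hf.comp_measurePreserving hfst).const_mul a).add
      ((hf.comp_measurePreserving hsnd).const_mul b) |>.add (memLp_const c)).integrable_sq
  have hprod (a b c : ℝ) := integral_sq_affine_of_marginals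
    (measurePreserving_fst (μ := μ) (ν := μ)) (measurePreserving_snd (μ := μ) (ν := μ)) hf a b c
  have hker (a b c : ℝ) := integral_sq_affine_of_marginals hfst hsnd hf a b c
  have lower := compare 1 (-1) 0
  have upper := compare 1 1 (-2 * ∫ x, f x ∂μ)
  rw [hprod, hker, integral_prod_mul] at lower upper
  rw [dform_eq_integral_sq_sub_integral_compProd hP hf, varF]
  constructor <;> nlinarith

end

lemma ofReal_le_gapE {α : Type*} [MeasurableSpace α] {μ : Measure α} {K : α → Measure α}
    {a : ℝ} (h : ∀ f, MemLp f 2 μ → a * varF μ f ≤ dform μ K f) :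
    ENNReal.ofReal a ≤ gapE μ K := by
  refine le_sInf ?_
  rintro r ⟨f, hf, hvar, rfl⟩
  exact ENNReal.ofReal_le_ofReal ((le_div_iff₀ hvar).2 (h f hf))

lemma ofReal_le_gapLE {α : Type*} [MeasurableSpace α] {μ : Measure α} {K : α → Measure α}
    {a : ℝ} (ha₀ : 0 ≤ a) (ha₂ : a ≤ 2)
    (h : ∀ f, MemLp f 2 μ → dform μ K f ≤ (2 - a) * varF μ f) :
    ENNReal.ofReal a ≤ gapLE μ K := by
  have hsup : sSup {r : ℝ≥0∞ | ∃ f : α → ℝ, MemLp f 2 μ ∧ 0 < varF μ f ∧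
      r = ENNReal.ofReal (dform μ K f / varF μ f)} ≤ 2 - ENNReal.ofReal a := by
    refine sSup_le ?_
    rintro r ⟨f, hf, hvar, rfl⟩
    calc ENNReal.ofReal (dform μ K f / varF μ f) ≤ ENNReal.ofReal (2 - a) :=
          ENNReal.ofReal_le_ofReal ((div_le_iff₀ hvar).2 (h f hf))
      _ = 2 - ENNReal.ofReal a := by rw [ENNReal.ofReal_sub _ ha₀]; norm_num
  calc ENNReal.ofReal a = 2 - (2 - ENNReal.ofReal a) :=
        (ENNReal.sub_sub_cancel (by norm_num) (by simpa using ha₂)).symm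
    _ ≤ gapLE μ K := tsub_le_tsub_left hsup 2

/-- For a `μ`-reversible Markov kernel `Π` satisfying the uniform minorization
`Π(x, A) ≥ ε μ(A)`, the Dirichlet form satisfies `ε var_μ(f) ≤ E_Π(f) ≤ (2 - ε) var_μ(f)`,
and consequently `min{Gap(Π), Gap_L(Π)} ≥ ε`. -/
theorem minorization_dirichlet_and_gaps {E : Type*} [MeasurableSpace E]
    (μ : Measure E) [IsProbabilityMeasure μ]
    (P : Kernel E E) [IsMarkovKernel P]
    (hrev : ∀ A B : Set E, MeasurableSet A → MeasurableSet B →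
      ∫⁻ x in A, P x B ∂μ = ∫⁻ x in B, P x A ∂μ)
    (ε : ℝ) (hε : 0 < ε)
    (hmin : ∀ x : E, ∀ A : Set E, MeasurableSet A → ENNReal.ofReal ε * μ A ≤ P x A) :
    (∀ f : E → ℝ, MemLp f 2 μ →
      ε * varF μ f ≤ dform μ (fun x => P x) f ∧
      dform μ (fun x => P x) f ≤ (2 - ε) * varF μ f) ∧
    ENNReal.ofReal ε ≤ min (gapE μ (fun x => P x)) (gapLE μ (fun x => P x)) := by
  have hP : P.Invariant μ := Kernel.IsReversible.invariant fun A B => hrev A B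
  have hmin' (x : E) : ENNReal.ofReal ε • μ ≤ P x :=
    Measure.le_iff.2 fun A hA => hmin x A hA
  obtain ⟨x₀⟩ := nonempty_of_isProbabilityMeasure μ
  have hε₁ : ε ≤ 1 := le_one_of_ofReal_smul_le (hmin' x₀)
  have hbounds (f : E → ℝ) (hf : MemLp f 2 μ) := dform_bounds_of_minorization hP hε.le hmin' hf
  exact ⟨hbounds, le_min (ofReal_le_gapE fun f hf => (hbounds f hf).1)
    (ofReal_le_gapLE hε.le (by linarith) fun f hf => (hbounds f hf).2)⟩
end

section
/- In the Metropolis-within-Gibbs setting, the kernel Φ_x(x₀,S) := ∫_Θ Π_θ(x₀,S) η(x₀,dθ) is reversible with respect to the marginal π_X; moreover, if for every θ ∈ Θ the kernel Π_θ is a positive operator on L²(X, ξ(θ,·)) (i.e. ∫∫ f(x)f(y) ξ(θ,dx) Π_θ(x,dy) ≥ 0 for all f ∈ L²(X,ξ(θ,·))), then Φ_x is a positive operator on L²(X,π_X), i.e. ∫∫ f(x)f(y) π_X(dx) Φ_x(x,dy) ≥ 0 for all f ∈ L²(X,π_X). -/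
/-! Both claims come from one identity of joint laws. By the second disintegration of `π`, the
law of `(x, y)` under `π_X ⊗ Φ_x` is the law of `(x, y)` when `(θ, x) ∼ π` and `y ∼ Π_θ(x, ·)`;
by the first disintegration this splits over `θ ∼ π_Θ` into the laws `ξ(θ, ·) ⊗ Π_θ`. Detailed
balance and positivity of each `Π_θ` therefore integrate to the same properties of `Φ_x`.
For `f ∈ L²(π_X)`, `f(x) f(y)` is integrable against the joint law by Cauchy–Schwarz, because
both of its marginals are `π_X` (reversibility makes `π_X` invariant under `Φ_x`), and
`f ∈ L²(ξ(θ, ·))` for `π_Θ`-a.e. `θ` because `π_X = ∫ ξ(θ, ·) π_Θ(dθ)`. -/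

open MeasureTheory ProbabilityTheory
open scoped ENNReal

variable {Θ X : Type*} [MeasurableSpace Θ] [MeasurableSpace X]

/-- The `X`-marginal chain kernel of the Metropolis-within-Gibbs sampler:
`Φ_x(x₀, S) = ∫_Θ Π_θ(x₀, S) η(x₀, dθ)`. -/
noncomputable def PhiX (η : Kernel X Θ) (Pk : Kernel (Θ × X) X) (x₀ : X) : Measure X :=
  (η x₀).bind (fun θ => Pk (θ, x₀))

section CompProd

variable {α β : Type*} {mα : MeasurableSpace α} {mβ : MeasurableSpace β}

theorem integrable_mul_of_memLp_two_fst_snd {Γ : Measure (α × β)} {f : α → ℝ} {g : β → ℝ}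
    (hf : MemLp f 2 Γ.fst) (hg : MemLp g 2 Γ.snd) :
    Integrable (fun p => f p.1 * g p.2) Γ :=
  (hf.comp_of_map measurable_fst.aemeasurable).integrable_mul
    (hg.comp_of_map measurable_snd.aemeasurable)

theorem ae_memLp_of_memLp_comp {E : Type*} [NormedAddCommGroup E] {p : ℝ≥0∞}
    (hp₀ : p ≠ 0) (hp : p ≠ ∞) {μ : Measure α} {κ : Kernel α β} {f : β → E}
    (hf : MemLp f p (κ ∘ₘ μ)) : ∀ᵐ a ∂μ, MemLp f p (κ a) := by
  have hint := (integrable_norm_rpow_iff hf.1 hp₀ hp).2 hf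
  filter_upwards [Measure.ae_integrable_of_integrable_comp hint,
    Measure.ae_ae_of_ae_comp hf.1.ae_eq_mk] with a hint_a hmk_a
  exact (integrable_norm_rpow_iff ⟨_, hf.1.stronglyMeasurable_mk, hmk_a⟩ hp₀ hp).1 hint_a

variable {μ : Measure α} [SFinite μ] {κ : Kernel α β} [IsSFiniteKernel κ] {f : α → ℝ} {g : β → ℝ}

theorem integral_mul_integral_eq_integral_compProd_s11
    (h : Integrable (fun p => f p.1 * g p.2) (μ ⊗ₘ κ)) :
    ∫ a, f a * ∫ b, g b ∂κ a ∂μ = ∫ p, f p.1 * g p.2 ∂(μ ⊗ₘ κ) := by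
  simp_rw [Measure.integral_compProd h, integral_const_mul]

theorem integrable_mul_integral_of_integrable_compProd
    (h : Integrable (fun p => f p.1 * g p.2) (μ ⊗ₘ κ)) :
    Integrable (fun a => f a * ∫ b, g b ∂κ a) μ := by
  simpa only [integral_const_mul, Kernel.prodMkLeft_apply, Kernel.const_apply] using
    h.integral_compProd

end CompProd

noncomputable def phiXKernel (η : Kernel X Θ) (Pk : Kernel (Θ × X) X) : Kernel X X :=
  Pk ∘ₖ (η ×ₖ Kernel.id)

instance (η : Kernel X Θ) [IsSFiniteKernel η] (Pk : Kernel (Θ × X) X) [IsSFiniteKernel Pk] :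
    IsSFiniteKernel (phiXKernel η Pk) := by
  unfold phiXKernel; infer_instance

instance (η : Kernel X Θ) [IsMarkovKernel η] (Pk : Kernel (Θ × X) X) [IsMarkovKernel Pk] :
    IsMarkovKernel (phiXKernel η Pk) := by
  unfold phiXKernel; infer_instance

theorem phiXKernel_apply (η : Kernel X Θ) [IsSFiniteKernel η] (Pk : Kernel (Θ × X) X) (x : X) :
    phiXKernel η Pk x = PhiX η Pk x := by
  ext s hs
  rw [phiXKernel, Kernel.comp_apply, Kernel.prod_apply, Kernel.id_apply, Measure.prod_dirac,
    PhiX, Measure.bind_apply hs (Kernel.aemeasurable _), Measure.bind_apply hs (by fun_prop),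
    lintegral_map (Kernel.measurable_coe _ hs) (by fun_prop)]

theorem compProd_phiXKernel (μ : Measure X) [SFinite μ] (η : Kernel X Θ) [IsSFiniteKernel η]
    (Pk : Kernel (Θ × X) X) [IsSFiniteKernel Pk] :
    μ ⊗ₘ phiXKernel η Pk = ((μ ⊗ₘ η).map Prod.swap ⊗ₘ Pk).map fun q => (q.1.2, q.2) := by
  ext s hs
  have hs' : MeasurableSet ((fun q : (Θ × X) × X => (q.1.2, q.2)) ⁻¹' s) :=
    hs.preimage (by fun_prop)
  rw [Measure.map_apply (by fun_prop) hs, Measure.compProd_apply hs', Measure.compProd_apply hs,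
    lintegral_map (Kernel.measurable_kernel_prodMk_left hs') measurable_swap,
    Measure.lintegral_compProd]
  · refine lintegral_congr fun x => ?_
    rw [phiXKernel_apply, PhiX, Measure.bind_apply (measurable_prodMk_left hs) (by fun_prop)]
    rfl
  · exact (Kernel.measurable_kernel_prodMk_left hs').comp measurable_swap

section Disintegration

variable {π : Measure (Θ × X)} {ξ : Kernel Θ X} {η : Kernel X Θ} {Pk : Kernel (Θ × X) X}

theorem compProd_phiXKernel_apply_prod [SFinite π] [IsSFiniteKernel ξ] [IsSFiniteKernel η]
    [IsSFiniteKernel Pk] (hdis₁ : π = π.fst ⊗ₘ ξ)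
    (hdis₂ : π = (π.snd ⊗ₘ η).map Prod.swap) {A B : Set X} (hA : MeasurableSet A)
    (hB : MeasurableSet B) :
    (π.snd ⊗ₘ phiXKernel η Pk) (A ×ˢ B) = ∫⁻ θ, ∫⁻ x in A, Pk (θ, x) B ∂ξ θ ∂π.fst := by
  have hdecomp := Measure.setLIntegral_compProd (μ := π.fst) (κ := ξ) (Pk.measurable_coe hB)
    MeasurableSet.univ hA
  rw [← hdis₁, Measure.restrict_univ] at hdecomp
  rw [compProd_phiXKernel, ← hdis₂, Measure.map_apply (by fun_prop) (hA.prod hB),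
    show (fun q : (Θ × X) × X => (q.1.2, q.2)) ⁻¹' (A ×ˢ B) = (Set.univ ×ˢ A) ×ˢ B by
      ext; simp,
    Measure.compProd_apply_prod (MeasurableSet.univ.prod hA) hB, hdecomp]

theorem isReversible_phiXKernel [SFinite π] [IsSFiniteKernel ξ] [IsSFiniteKernel η]
    [IsSFiniteKernel Pk] (hdis₁ : π = π.fst ⊗ₘ ξ)
    (hdis₂ : π = (π.snd ⊗ₘ η).map Prod.swap) (hrev : ∀ θ, (Pk.sectR θ).IsReversible (ξ θ)) :
    (phiXKernel η Pk).IsReversible π.snd := by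
  intro A B hA hB
  rw [← Measure.compProd_apply_prod hA hB, ← Measure.compProd_apply_prod hB hA,
    compProd_phiXKernel_apply_prod hdis₁ hdis₂ hA hB,
    compProd_phiXKernel_apply_prod hdis₁ hdis₂ hB hA]
  exact lintegral_congr fun θ => hrev θ hA hB

theorem integral_mul_integral_phiXKernel [SFinite π] [IsSFiniteKernel ξ] [IsMarkovKernel η]
    [IsMarkovKernel Pk] (hdis₁ : π = π.fst ⊗ₘ ξ)
    (hdis₂ : π = (π.snd ⊗ₘ η).map Prod.swap) (hinv : (phiXKernel η Pk).Invariant π.snd)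
    {f : X → ℝ} (hf : MemLp f 2 π.snd) :
    ∫ x, f x * ∫ y, f y ∂phiXKernel η Pk x ∂π.snd
      = ∫ θ, ∫ x, f x * ∫ y, f y ∂Pk (θ, x) ∂ξ θ ∂π.fst := by
  have hjoint : π.snd ⊗ₘ phiXKernel η Pk = (π ⊗ₘ Pk).map fun q => (q.1.2, q.2) := by
    rw [compProd_phiXKernel, ← hdis₂]
  have hΓ : Integrable (fun p => f p.1 * f p.2) (π.snd ⊗ₘ phiXKernel η Pk) :=
    integrable_mul_of_memLp_two_fst_snd (by rwa [Measure.fst_compProd])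
      (by rwa [Measure.snd_compProd, hinv.def])
  have hπPk : Integrable (fun q : (Θ × X) × X => f q.1.2 * f q.2) (π ⊗ₘ Pk) := by
    rw [hjoint] at hΓ
    exact (integrable_map_measure hΓ.1 (by fun_prop)).1 hΓ
  calc ∫ x, f x * ∫ y, f y ∂phiXKernel η Pk x ∂π.snd
      = ∫ p, f p.1 * f p.2 ∂(π.snd ⊗ₘ phiXKernel η Pk) :=
        integral_mul_integral_eq_integral_compProd_s11 hΓ
    _ = ∫ q, f q.1.2 * f q.2 ∂(π ⊗ₘ Pk) := by
        rw [hjoint, integral_map (by fun_prop) (by rw [← hjoint]; exact hΓ.1)]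
    _ = ∫ p, f p.2 * ∫ y, f y ∂Pk p ∂π :=
        (integral_mul_integral_eq_integral_compProd_s11 (f := fun p : Θ × X => f p.2) hπPk).symm
    _ = ∫ θ, ∫ x, f x * ∫ y, f y ∂Pk (θ, x) ∂ξ θ ∂π.fst := by
        have h :=
          integrable_mul_integral_of_integrable_compProd (f := fun p : Θ × X => f p.2) hπPk
        rw [hdis₁] at h
        conv_lhs => rw [hdis₁]
        exact Measure.integral_compProd h

end Disintegration

/-- In the Metropolis-within-Gibbs setting, the kernel `Φ_x` is reversible with respect to the
marginal `π_X`, and it is a positive operator on `L²(X, π_X)` whenever every `Π_θ` is a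
positive operator on `L²(X, ξ(θ, ·))`. -/
theorem mwg_phix_reversible_and_positive
    (π : Measure (Θ × X)) [IsProbabilityMeasure π]
    (ξ : Kernel Θ X) [IsMarkovKernel ξ] (η : Kernel X Θ) [IsMarkovKernel η]
    (hdis₁ : π = Measure.compProd π.fst ξ)
    (hdis₂ : π = (Measure.compProd π.snd η).map Prod.swap)
    (Pk : Kernel (Θ × X) X) [IsMarkovKernel Pk]
    (hrev : ∀ θ : Θ, ∀ A B : Set X, MeasurableSet A → MeasurableSet B →
      ∫⁻ x in A, Pk (θ, x) B ∂(ξ θ) = ∫⁻ x in B, Pk (θ, x) A ∂(ξ θ)) :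
    (∀ A B : Set X, MeasurableSet A → MeasurableSet B →
      ∫⁻ x in A, PhiX η Pk x B ∂π.snd = ∫⁻ x in B, PhiX η Pk x A ∂π.snd) ∧
    ((∀ θ : Θ, ∀ f : X → ℝ, MemLp f 2 (ξ θ) →
        0 ≤ ∫ x, f x * ∫ y, f y ∂(Pk (θ, x)) ∂(ξ θ)) →
      ∀ f : X → ℝ, MemLp f 2 π.snd →
        0 ≤ ∫ x, f x * ∫ y, f y ∂(PhiX η Pk x) ∂π.snd) := by
  have hrevΦ : (phiXKernel η Pk).IsReversible π.snd :=
    isReversible_phiXKernel hdis₁ hdis₂ fun θ A B hA hB => hrev θ A B hA hB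
  refine ⟨fun A B hA hB => by simpa only [phiXKernel_apply] using hrevΦ hA hB,
    fun hpos f hf => ?_⟩
  have hπX : π.snd = ξ ∘ₘ π.fst := by
    conv_lhs => rw [hdis₁]
    exact Measure.snd_compProd _ _
  simp_rw [← phiXKernel_apply, integral_mul_integral_phiXKernel hdis₁ hdis₂ hrevΦ.invariant hf]
  refine integral_nonneg_of_ae ?_
  filter_upwards [ae_memLp_of_memLp_comp two_ne_zero ENNReal.ofNat_ne_top (hπX ▸ hf)]
    with θ hθ using hpos θ f hθ
end

section
/- In the Metropolis-within-Gibbs setting, for every f ∈ L²(Θ,π_Θ), viewed as a function on Θ×X depending only on θ, and every k ≥ 1: ⟨f, Φ^k f⟩_π = ⟨f̄, Φ_x^{k−1} f̄⟩_{π_X}, where f̄(x) := ∫_Θ f(θ) η(x,dθ). Consequently, if the series var(f̄,Φ_x) := var_{π_X}(f̄) + 2 Σ_{k=1}^∞ ⟨f̄ − π_X(f̄), Φ_x^k (f̄ − π_X(f̄))⟩_{π_X} converges, then the series defining var(f,Φ) := var_{π_Θ}(f) + 2 Σ_{k=1}^∞ ⟨f − π_Θ(f), Φ^k (f − π_Θ(f))⟩_π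 converges and var(f,Φ) = var_{π_Θ}(f) + var_{π_X}(f̄) + var(f̄,Φ_x). -/
/-!
A step of `Φ` from `(θ₀, x)` forgets `θ₀`: it draws `θ ~ η(x, ·)`, then `y ~ Π_θ(x, ·)`.
So `Φ = Ψ ∘ S`, where `S(θ₀, x) = δ_x` and `Ψ(x)` is the law of `(θ, y)`, and since
`S ∘ Ψ = Φ_x` we get `Φ^{k+1} = Ψ ∘ Φ_x^k ∘ S`. The `θ`-marginal of `Ψ(x)` is `η(x, ·)`, so
`(Φ^{k+1} f)(θ₀, x) = (Φ_x^k f̄)(x)`, and integrating against `f(θ₀)` under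
`π(dθ₀ × dx) = π_X(dx) η(x, dθ₀)` gives `⟨f̄, Φ_x^k f̄⟩_{π_X}`. Each `Π_θ` leaves `ξ(θ, ·)`
invariant, hence `Φ_x` leaves `π_X` invariant, and Jensen's inequality keeps every function in
sight in `L²`. Applied to `f - π_Θ(f)`, whose average is `f̄ - π_X(f̄)`, this identifies the
series for `f` with the series for `f̄` shifted by one index; the extra term is `var_{π_X}(f̄)`.
-/

open MeasureTheory ProbabilityTheory
open scoped ENNReal

/-- Iterates of a Markov transition `P : α → Measure α`. -/
noncomputable def iterFun {α : Type*} [MeasurableSpace α] (P : α → Measure α) :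
    ℕ → α → Measure α
  | 0 => fun x => Measure.dirac x
  | (n + 1) => fun x => (P x).bind (iterFun P n)

variable {Θ X : Type*} [MeasurableSpace Θ] [MeasurableSpace X]

/-- The Metropolis-within-Gibbs kernel on `Θ × X`:
`Φ(θ₀, x; dθ × dy) = η(x, dθ) Π_θ(x, dy)`. -/
noncomputable def PhiFull (η : Kernel X Θ) (Pk : Kernel (Θ × X) X)
    (p : Θ × X) : Measure (Θ × X) :=
  (η p.2).bind (fun θ => (Pk (θ, p.2)).map (fun y => (θ, y)))

namespace ProbabilityTheory.Kernel

variable {α β : Type*} [MeasurableSpace α] [MeasurableSpace β]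

instance isMarkovKernel_pow (κ : Kernel α α) [IsMarkovKernel κ] (n : ℕ) :
    IsMarkovKernel (κ ^ n) := by
  induction n with
  | zero => rw [pow_zero]; exact inferInstanceAs (IsMarkovKernel Kernel.id)
  | succ n ih => rw [pow_succ]; exact inferInstanceAs (IsMarkovKernel ((κ ^ n) ∘ₖ κ))

lemma Invariant.pow {κ : Kernel α α} {μ : Measure α} (hκ : Invariant κ μ) :
    ∀ n : ℕ, Invariant (κ ^ n) μ
  | 0 => by rw [pow_zero]; exact Measure.id_comp
  | n + 1 => by rw [pow_succ]; exact (hκ.pow n).comp hκ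

lemma comp_pow_succ (A : Kernel β α) (B : Kernel α β) (k : ℕ) :
    (A ∘ₖ B) ^ (k + 1) = A ∘ₖ (((B ∘ₖ A) ^ k) ∘ₖ B) := by
  induction k with
  | zero => rw [zero_add, pow_one, pow_zero]; exact congrArg (A ∘ₖ ·) (id_comp B).symm
  | succ k ih =>
    rw [pow_succ, ih, pow_succ]
    change A ∘ₖ (((B ∘ₖ A) ^ k) ∘ₖ B) ∘ₖ (A ∘ₖ B) = A ∘ₖ ((((B ∘ₖ A) ^ k) ∘ₖ (B ∘ₖ A)) ∘ₖ B)
    simp only [comp_assoc]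

end ProbabilityTheory.Kernel

lemma iterFun_eq_pow {α : Type*} [MeasurableSpace α] (κ : Kernel α α) :
    ∀ n : ℕ, iterFun (⇑κ) n = ⇑(κ ^ n)
  | 0 => by funext x; rw [pow_zero]; rfl
  | n + 1 => by
    funext x
    rw [pow_succ, iterFun, iterFun_eq_pow κ n]
    rfl

lemma sq_integral_le_integral_sq {α : Type*} [MeasurableSpace α] {μ : Measure α}
    [IsProbabilityMeasure μ] {g : α → ℝ} (hg : MemLp g 2 μ) :
    (∫ x, g x ∂μ) ^ 2 ≤ ∫ x, g x ^ 2 ∂μ := by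
  have := variance_nonneg g μ
  rw [variance_eq_sub hg] at this
  simpa [sub_nonneg] using this

lemma varF_eq_integral_sub_sq {α : Type*} [MeasurableSpace α] {μ : Measure α}
    [IsProbabilityMeasure μ] {g : α → ℝ} (hg : MemLp g 2 μ) :
    varF μ g = ∫ x, (g x - ∫ y, g y ∂μ) ^ 2 ∂μ := by
  rw [varF, ← variance_eq_integral hg.1.aemeasurable, variance_eq_sub hg]
  rfl

namespace MeasureTheory.Measure

variable {α β : Type*} [MeasurableSpace α] [MeasurableSpace β] {μ : Measure α} {κ : Kernel α β}

lemma comp_map {γ : Type*} [MeasurableSpace γ] {f : γ → α} (hf : Measurable f) (ν : Measure γ) :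
    κ ∘ₘ ν.map f = κ.comap f hf ∘ₘ ν := by
  ext s hs
  rw [bind_apply hs κ.aemeasurable, bind_apply hs (Kernel.aemeasurable _),
    lintegral_map (κ.measurable_coe hs) hf]
  rfl

lemma comp_compProd_of_invariant [SFinite μ] [IsSFiniteKernel κ] {P : Kernel (α × β) β}
    (hP : ∀ a, Kernel.Invariant (P.comap (Prod.mk a) measurable_prodMk_left) (κ a)) :
    P ∘ₘ (μ ⊗ₘ κ) = κ ∘ₘ μ := by
  ext s hs
  rw [bind_apply hs P.aemeasurable, bind_apply hs κ.aemeasurable,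
    lintegral_compProd (P.measurable_coe hs)]
  refine lintegral_congr fun a => ?_
  conv_rhs => rw [← hP a]
  rw [bind_apply hs (Kernel.aemeasurable _)]
  rfl

lemma integral_comp {g : β → ℝ} (hg : Integrable g (κ ∘ₘ μ)) :
    ∫ y, g y ∂(κ ∘ₘ μ) = ∫ x, ∫ y, g y ∂κ x ∂μ := by
  rw [comp_eq_comp_const_apply] at hg ⊢
  rw [Kernel.integral_comp hg, Kernel.const_apply]

lemma integral_kernel_congr_ae {g h : β → ℝ} (hgh : g =ᵐ[κ ∘ₘ μ] h) :
    (fun x => ∫ y, g y ∂κ x) =ᵐ[μ] fun x => ∫ y, h y ∂κ x := by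
  filter_upwards [ae_ae_of_ae_comp hgh] with x hx using integral_congr_ae hx

lemma _root_.MeasureTheory.AEStronglyMeasurable.integral_kernel_of_comp {g : β → ℝ}
    (hg : AEStronglyMeasurable g (κ ∘ₘ μ)) :
    AEStronglyMeasurable (fun x => ∫ y, g y ∂κ x) μ := by
  rw [comp_eq_comp_const_apply] at hg
  simpa using hg.integral_kernel_comp

lemma memLp_two_integral_kernel [IsMarkovKernel κ] {g : β → ℝ} (hg : MemLp g 2 (κ ∘ₘ μ)) :
    MemLp (fun x => ∫ y, g y ∂κ x) 2 μ := by
  have hsq : Integrable (fun y => g y ^ 2) (κ ∘ₘ μ) := hg.integrable_sq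
  have hmeas : ∀ᵐ x ∂μ, AEStronglyMeasurable g (κ x) := by
    have h := hg.1
    rw [comp_eq_comp_const_apply] at h
    simpa using h.comp
  have hbound : Integrable (fun x => ∫ y, g y ^ 2 ∂κ x) μ := by
    simpa using integrable_integral_norm_of_integrable_comp hsq
  refine (memLp_two_iff_integrable_sq hg.1.integral_kernel_of_comp).2 <|
    hbound.mono' (hg.1.integral_kernel_of_comp.pow 2) ?_
  filter_upwards [ae_integrable_of_integrable_comp hsq, hmeas] with x hx hxm
  rw [Real.norm_eq_abs, abs_sq]
  exact sq_integral_le_integral_sq ((memLp_two_iff_integrable_sq hxm).2 hx)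

end MeasureTheory.Measure

-- `integral_dirac'` needs a strongly measurable integrand; a.e. this is enough.
lemma ae_integral_dirac_eq {α : Type*} [MeasurableSpace α] {μ : Measure α} {u : α → ℝ}
    (hu : AEStronglyMeasurable u μ) : ∀ᵐ x ∂μ, ∫ y, u y ∂(Measure.dirac x) = u x := by
  have h := Measure.integral_kernel_congr_ae (κ := Kernel.id) (g := u) (h := hu.mk u)
    (by rw [Measure.id_comp]; exact hu.ae_eq_mk)
  filter_upwards [h, hu.ae_eq_mk] with x h₁ h₂
  rw [Kernel.id_apply] at h₁
  rw [h₁, integral_dirac' _ _ hu.stronglyMeasurable_mk, h₂]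

lemma integral_sub_mul_integral_pow_zero {α : Type*} [MeasurableSpace α] {μ : Measure α}
    [IsProbabilityMeasure μ] (K : Kernel α α) {u : α → ℝ} (hu : MemLp u 2 μ) {c : ℝ}
    (hc : ∫ x, u x ∂μ = c) :
    ∫ x, (u x - c) * ∫ y, (u y - c) ∂((K ^ 0) x) ∂μ = varF μ u := by
  rw [varF_eq_integral_sub_sq hu, hc, pow_zero]
  refine integral_congr_ae ?_
  filter_upwards [ae_integral_dirac_eq (u := fun y => u y - c)
    (hu.1.sub aestronglyMeasurable_const)] with x hx
  change _ * ∫ y, (u y - c) ∂(Kernel.id x) = _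
  rw [Kernel.id_apply, hx, sq]

namespace MetropolisWithinGibbs

open Kernel

section Kernels

variable (η : Kernel X Θ) (Pk : Kernel (Θ × X) X)

/- `fullKernel` is `Φ` and `marginalKernel` is `Φ_x`. With `thetaRefresh x = η(x, ·) ⊗ δ_x`
and `xMove (θ, x) = δ_θ ⊗ Π_θ(x, ·)`, `sweep x` is the law of `(θ, y)` after one sweep from `x`. -/

noncomputable def thetaRefresh : Kernel X (Θ × X) := η ×ₖ Kernel.id

noncomputable def xMove : Kernel (Θ × X) (Θ × X) :=
  deterministic Prod.fst measurable_fst ×ₖ Pk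

noncomputable def sweep : Kernel X (Θ × X) := xMove Pk ∘ₖ thetaRefresh η

noncomputable def marginalKernel : Kernel X X := Pk ∘ₖ thetaRefresh η

noncomputable def fullKernel : Kernel (Θ × X) (Θ × X) :=
  sweep η Pk ∘ₖ deterministic Prod.snd measurable_snd

instance [IsMarkovKernel η] [IsMarkovKernel Pk] : IsMarkovKernel (marginalKernel η Pk) := by
  rw [marginalKernel, thetaRefresh]; infer_instance

lemma thetaRefresh_apply [IsMarkovKernel η] (x : X) :
    thetaRefresh η x = (η x).map (fun θ => (θ, x)) := by
  rw [thetaRefresh, prod_apply, id_apply, Measure.prod_dirac]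

lemma xMove_apply [IsMarkovKernel Pk] (p : Θ × X) : xMove Pk p = (Pk p).map (Prod.mk p.1) := by
  rw [xMove, prod_apply, deterministic_apply, Measure.dirac_prod]

lemma coe_marginalKernel [IsMarkovKernel η] : ⇑(marginalKernel η Pk) = PhiX η Pk := by
  funext x
  rw [marginalKernel, comp_apply, thetaRefresh_apply, Measure.comp_map measurable_prodMk_right]
  rfl

lemma coe_fullKernel [IsMarkovKernel η] [IsMarkovKernel Pk] :
    ⇑(fullKernel η Pk) = PhiFull η Pk := by
  funext p
  rw [fullKernel, comp_deterministic_eq_comap, comap_apply, sweep, comp_apply, thetaRefresh_apply,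
    Measure.comp_map measurable_prodMk_right, PhiFull]
  congr 1
  funext θ
  exact xMove_apply Pk (θ, p.2)

lemma fst_sweep [IsMarkovKernel η] [IsMarkovKernel Pk] : (sweep η Pk).fst = η := by
  rw [sweep, fst_comp, xMove, fst_prod, deterministic_comp_eq_map, ← fst_eq, thetaRefresh, fst_prod]

lemma snd_sweep [IsMarkovKernel Pk] : (sweep η Pk).snd = marginalKernel η Pk := by
  rw [sweep, snd_comp, xMove, snd_prod, marginalKernel]

lemma fullKernel_pow_succ_apply [IsMarkovKernel Pk] (k : ℕ) (p : Θ × X) :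
    (fullKernel η Pk ^ (k + 1)) p = (sweep η Pk ∘ₖ (marginalKernel η Pk ^ k)) p.2 := by
  rw [fullKernel, comp_pow_succ, deterministic_comp_eq_map, ← snd_eq, snd_sweep, ← comp_assoc,
    comp_deterministic_eq_comap, comap_apply]

end Kernels

variable {η : Kernel X Θ} {Pk : Kernel (Θ × X) X} {π : Measure (Θ × X)} [IsMarkovKernel η]

lemma ae_integral_sweep_comp [IsMarkovKernel Pk] {T : Kernel X X} (hT : Invariant T π.snd)
    (hη : η ∘ₘ π.snd = π.fst) {f : Θ → ℝ} (hf : Integrable f π.fst) :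
    (fun x => ∫ q, f q.1 ∂((sweep η Pk ∘ₖ T) x)) =ᵐ[π.snd]
      fun x => ∫ y, (∫ θ, f θ ∂η y) ∂T x := by
  rw [← hη, ← hT.def, Measure.comp_assoc] at hf
  filter_upwards [Measure.ae_integrable_of_integrable_comp hf] with x hx
  have hfst : (η ∘ₖ T) x = ((sweep η Pk ∘ₖ T) x).map Prod.fst := by
    rw [← fst_apply, fst_comp, fst_sweep]
  rw [← Kernel.integral_comp hx, hfst, integral_map measurable_fst.aemeasurable (hfst ▸ hx).1]

variable [IsProbabilityMeasure π]

lemma comp_thetaRefresh (hdis₂ : π = (Measure.compProd π.snd η).map Prod.swap) :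
    thetaRefresh η ∘ₘ π.snd = π := by
  rw [thetaRefresh, ← swap_prod, ← Measure.comp_assoc, ← Measure.compProd_eq_comp_prod,
    Measure.swap_comp, ← hdis₂]

lemma comp_eta (hdis₂ : π = (Measure.compProd π.snd η).map Prod.swap) :
    η ∘ₘ π.snd = π.fst := by
  conv_rhs => rw [hdis₂]
  rw [Measure.fst_map_swap, Measure.snd_compProd]

lemma invariant_marginalKernel [IsMarkovKernel Pk] {ξ : Kernel Θ X} [IsSFiniteKernel ξ]
    (hdis₁ : π = Measure.compProd π.fst ξ)
    (hdis₂ : π = (Measure.compProd π.snd η).map Prod.swap)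
    (hrev : ∀ θ : Θ, ∀ A B : Set X, MeasurableSet A → MeasurableSet B →
      ∫⁻ x in A, Pk (θ, x) B ∂(ξ θ) = ∫⁻ x in B, Pk (θ, x) A ∂(ξ θ)) :
    Invariant (marginalKernel η Pk) π.snd := by
  have hinv (θ : Θ) : Invariant (Pk.comap (Prod.mk θ) measurable_prodMk_left) (ξ θ) :=
    IsReversible.invariant fun _ _ => hrev θ _ _
  calc marginalKernel η Pk ∘ₘ π.snd = Pk ∘ₘ (π.fst ⊗ₘ ξ) := by
        rw [marginalKernel, ← Measure.comp_assoc, comp_thetaRefresh hdis₂, ← hdis₁]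
    _ = ξ ∘ₘ π.fst := Measure.comp_compProd_of_invariant hinv
    _ = π.snd := by rw [← Measure.snd_compProd, ← hdis₁]

lemma integral_fst_mul_snd (hdis₂ : π = (Measure.compProd π.snd η).map Prod.swap)
    {f : Θ → ℝ} {H : X → ℝ} (hf : MemLp f 2 π.fst) (hH : MemLp H 2 π.snd) :
    ∫ p, f p.1 * H p.2 ∂π = ∫ x, (∫ θ, f θ ∂η x) * H x ∂π.snd := by
  have hint : Integrable (fun p : Θ × X => f p.1 * H p.2) π :=
    (hf.comp_of_map measurable_fst.aemeasurable).integrable_mul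
      (hH.comp_of_map measurable_snd.aemeasurable)
  -- Naming `π.snd` keeps `rw [hdis₂]` from rewriting the `π` inside it.
  set ν := π.snd
  rw [hdis₂] at hint ⊢
  rw [integral_map measurable_swap.aemeasurable hint.1]
  refine (Measure.integral_compProd (f := fun z : X × Θ => f z.2 * H z.1)
    ((integrable_map_measure hint.1 measurable_swap.aemeasurable).1 hint)).trans ?_
  simp_rw [integral_mul_const]

variable [IsMarkovKernel Pk]

lemma integral_mul_integral_fullKernel_pow_succ
    (hdis₂ : π = (Measure.compProd π.snd η).map Prod.swap)
    (hM : Invariant (marginalKernel η Pk) π.snd) {f : Θ → ℝ} (hf : MemLp f 2 π.fst) (k : ℕ) :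
    ∫ p, f p.1 * ∫ q, f q.1 ∂((fullKernel η Pk ^ (k + 1)) p) ∂π =
      ∫ x, (∫ θ, f θ ∂η x) * ∫ y, (∫ θ, f θ ∂η y) ∂((marginalKernel η Pk ^ k) x) ∂π.snd := by
  have hη := comp_eta hdis₂
  have hfbar : MemLp (fun x => ∫ θ, f θ ∂η x) 2 π.snd :=
    Measure.memLp_two_integral_kernel (hη ▸ hf)
  have hTfbar : MemLp (fun x => ∫ y, (∫ θ, f θ ∂η y) ∂((marginalKernel η Pk ^ k) x)) 2 π.snd :=
    Measure.memLp_two_integral_kernel (by rwa [(hM.pow k).def])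
  have hsweep := ae_integral_sweep_comp (Pk := Pk) (hM.pow k) hη (hf.integrable one_le_two)
  simp_rw [fullKernel_pow_succ_apply]
  rw [integral_fst_mul_snd hdis₂ hf (hTfbar.ae_eq hsweep.symm)]
  exact integral_congr_ae ((ae_eq_refl _).mul hsweep)

lemma integral_sub_mul_integral_fullKernel_pow_succ
    (hdis₂ : π = (Measure.compProd π.snd η).map Prod.swap)
    (hM : Invariant (marginalKernel η Pk) π.snd) {f : Θ → ℝ} (hf : MemLp f 2 π.fst) (c : ℝ)
    (k : ℕ) :
    ∫ p, (f p.1 - c) * ∫ q, (f q.1 - c) ∂((fullKernel η Pk ^ (k + 1)) p) ∂π =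
      ∫ x, ((∫ θ, f θ ∂η x) - c) *
        ∫ y, ((∫ θ, f θ ∂η y) - c) ∂((marginalKernel η Pk ^ k) x) ∂π.snd := by
  have hbar : (fun x => ∫ θ, (f θ - c) ∂η x) =ᵐ[π.snd] fun x => (∫ θ, f θ ∂η x) - c := by
    filter_upwards [Measure.ae_integrable_of_integrable_comp
      ((comp_eta hdis₂) ▸ hf.integrable one_le_two)] with x hx
    rw [integral_sub hx (integrable_const c), MeasureTheory.integral_const, probReal_univ,
      one_smul]
  rw [integral_mul_integral_fullKernel_pow_succ hdis₂ hM (f := fun θ => f θ - c)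
    (hf.sub (memLp_const c)) k]
  refine integral_congr_ae ?_
  filter_upwards [hbar, Measure.integral_kernel_congr_ae ((hM.pow k).def ▸ hbar)] with x h₁ h₂
  rw [h₁, h₂]

end MetropolisWithinGibbs

open MetropolisWithinGibbs in
/-- For `f ∈ L²(Θ, π_Θ)` and `k ≥ 1`, `⟨f, Φ^k f⟩_π = ⟨f̄, Φ_x^{k-1} f̄⟩_{π_X}` where
`f̄(x) = ∫ f(θ) η(x, dθ)`; consequently, convergence of the autocovariance series of `f̄` for
`Φ_x` implies convergence of the autocovariance series of `f` for `Φ`, with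
`var(f, Φ) = var_{π_Θ}(f) + var_{π_X}(f̄) + var(f̄, Φ_x)`. -/
theorem mwg_theta_variance_decomposition
    (π : Measure (Θ × X)) [IsProbabilityMeasure π]
    (ξ : Kernel Θ X) [IsMarkovKernel ξ] (η : Kernel X Θ) [IsMarkovKernel η]
    (hdis₁ : π = Measure.compProd π.fst ξ)
    (hdis₂ : π = (Measure.compProd π.snd η).map Prod.swap)
    (Pk : Kernel (Θ × X) X) [IsMarkovKernel Pk]
    (hrev : ∀ θ : Θ, ∀ A B : Set X, MeasurableSet A → MeasurableSet B →
      ∫⁻ x in A, Pk (θ, x) B ∂(ξ θ) = ∫⁻ x in B, Pk (θ, x) A ∂(ξ θ))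
    (f : Θ → ℝ) (hf : MemLp f 2 π.fst) :
    (∀ k : ℕ, 1 ≤ k →
      (∫ p, f p.1 * ∫ q, f q.1 ∂(iterFun (PhiFull η Pk) k p) ∂π) =
        ∫ x, (∫ θ, f θ ∂(η x)) *
          ∫ y, (∫ θ, f θ ∂(η y)) ∂(iterFun (PhiX η Pk) (k - 1) x) ∂π.snd) ∧
    (Summable (fun k : ℕ =>
        ∫ x, ((∫ θ, f θ ∂(η x)) - ∫ t, (∫ θ, f θ ∂(η t)) ∂π.snd) *
          ∫ y, ((∫ θ, f θ ∂(η y)) - ∫ t, (∫ θ, f θ ∂(η t)) ∂π.snd)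
            ∂(iterFun (PhiX η Pk) (k + 1) x) ∂π.snd) →
      Summable (fun k : ℕ =>
        ∫ p, (f p.1 - ∫ t, f t ∂π.fst) *
          ∫ q, (f q.1 - ∫ t, f t ∂π.fst) ∂(iterFun (PhiFull η Pk) (k + 1) p) ∂π) ∧
      varF π.fst f + 2 * (∑' k : ℕ,
          ∫ p, (f p.1 - ∫ t, f t ∂π.fst) *
            ∫ q, (f q.1 - ∫ t, f t ∂π.fst) ∂(iterFun (PhiFull η Pk) (k + 1) p) ∂π) =
        varF π.fst f + varF π.snd (fun x => ∫ θ, f θ ∂(η x)) +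
          (varF π.snd (fun x => ∫ θ, f θ ∂(η x)) + 2 * ∑' k : ℕ,
            ∫ x, ((∫ θ, f θ ∂(η x)) - ∫ t, (∫ θ, f θ ∂(η t)) ∂π.snd) *
              ∫ y, ((∫ θ, f θ ∂(η y)) - ∫ t, (∫ θ, f θ ∂(η t)) ∂π.snd)
                ∂(iterFun (PhiX η Pk) (k + 1) x) ∂π.snd)) := by
  have hη := comp_eta hdis₂
  have hM := invariant_marginalKernel hdis₁ hdis₂ hrev
  have hfbar : MemLp (fun x => ∫ θ, f θ ∂η x) 2 π.snd :=
    Measure.memLp_two_integral_kernel (hη ▸ hf)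
  have hmean : ∫ x, (∫ θ, f θ ∂η x) ∂π.snd = ∫ θ, f θ ∂π.fst := by
    rw [← Measure.integral_comp (hη ▸ hf.integrable one_le_two), hη]
  simp only [← coe_fullKernel η Pk, ← coe_marginalKernel η Pk, iterFun_eq_pow, hmean]
  refine ⟨fun k hk => ?_, fun hsum => ?_⟩
  · obtain ⟨k, rfl⟩ := Nat.exists_eq_add_of_le' hk
    exact integral_mul_integral_fullKernel_pow_succ hdis₂ hM hf k
  · have hs : Summable fun k => ∫ x, ((∫ θ, f θ ∂η x) - ∫ θ, f θ ∂π.fst) *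
        ∫ y, ((∫ θ, f θ ∂η y) - ∫ θ, f θ ∂π.fst) ∂((marginalKernel η Pk ^ k) x) ∂π.snd :=
      (summable_nat_add_iff 1).mp hsum
    simp only [integral_sub_mul_integral_fullKernel_pow_succ hdis₂ hM hf]
    refine ⟨hs, ?_⟩
    rw [hs.tsum_eq_zero_add, integral_sub_mul_integral_pow_zero _ hfbar hmean]
    ring
end

section
/- Let {μ_x}_{x∈X} be a family of finite measures on (ℝ^d, B(ℝ^d)) such that x ↦ μ_x(A) is a measurable mapping for each A ∈ B(ℝ^d), and let ξ be a probability measure on the measurable space (X, B(X)). Then for any ε > 0 there exists a set A ∈ B(X) with ξ(A) ≥ 1 − ε such that the family {μ_x}_{x∈A} is tight, i.e. for every δ > 0 there exists r < ∞ such that μ_x({y ∈ ℝ^d : |y| > r}) ≤ δ for all x ∈ A. -/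
/-!
A single finite measure has vanishing tails, `μ_x {y | r < ‖y‖} → 0` as `r → ∞`, so the tail
masses at integer radii tend to `0` pointwise in `x`. Egorov's theorem makes this convergence
uniform outside a set of `ξ`-measure at most `ε`, and uniform convergence of the tail masses is
exactly tightness of `{μ_x}` on the complement.
-/

open MeasureTheory Filter
open scoped ENNReal Topology

namespace MeasureTheory

section Tails

variable {E : Type*} [NormedAddCommGroup E] [MeasurableSpace E] [OpensMeasurableSpace E]

lemma tendsto_measure_norm_gt_atTop (ν : Measure E) [IsFiniteMeasure ν] :
    Tendsto (fun r : ℝ => ν {y | r < ‖y‖}) atTop (𝓝 0) := by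
  have hanti : Antitone fun r : ℝ => {y : E | r < ‖y‖} :=
    fun _ _ hrr' _ hy => hrr'.trans_lt hy
  have hempty : ⋂ r : ℝ, {y : E | r < ‖y‖} = ∅ :=
    Set.iInter_eq_empty_iff.2 fun y => ⟨‖y‖, lt_irrefl (‖y‖)⟩
  have h := tendsto_measure_iInter_atTop (μ := ν)
    (fun _ => (measurableSet_lt measurable_const measurable_norm).nullMeasurableSet) hanti
    ⟨0, measure_ne_top _ _⟩
  rwa [hempty, measure_empty] at h

variable {X : Type*} [MeasurableSpace X]

lemma exists_measure_le_tendstoUniformlyOn_measureReal_norm_gt (μ : X → Measure E)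
    [∀ x, IsFiniteMeasure (μ x)]
    (hμ : ∀ A : Set E, MeasurableSet A → Measurable fun x => μ x A)
    (ξ : Measure X) [IsFiniteMeasure ξ] {ε : ℝ} (hε : 0 < ε) :
    ∃ t, MeasurableSet t ∧ ξ t ≤ ENNReal.ofReal ε ∧
      TendstoUniformlyOn (fun (n : ℕ) x => (μ x).real {y | (n : ℝ) < ‖y‖}) 0 atTop tᶜ := by
  refine tendstoUniformlyOn_of_ae_tendsto' (fun n => ?_) stronglyMeasurable_const
    (ae_of_all _ fun x => ?_) hε
  · exact (hμ _ (measurableSet_lt measurable_const measurable_norm)).ennreal_toReal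
      |>.stronglyMeasurable
  · exact (ENNReal.tendsto_toReal ENNReal.zero_ne_top).comp
      ((tendsto_measure_norm_gt_atTop (μ x)).comp tendsto_natCast_atTop_atTop)

end Tails

lemma exists_forall_measure_le_of_tendstoUniformlyOn {α X ι : Type*} [MeasurableSpace α]
    (μ : X → Measure α) [∀ x, IsFiniteMeasure (μ x)] {S : ι → Set α} {l : Filter ι} [l.NeBot]
    {s : Set X} (h : TendstoUniformlyOn (fun i x => (μ x).real (S i)) 0 l s) {δ : ℝ}
    (hδ : 0 < δ) : ∃ i, ∀ x ∈ s, μ x (S i) ≤ ENNReal.ofReal δ := by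
  obtain ⟨i, hi⟩ := (Metric.tendstoUniformlyOn_iff.1 h δ hδ).exists
  refine ⟨i, fun x hx => ?_⟩
  have hlt : |(μ x).real (S i)| < δ := by simpa using hi x hx
  exact (ENNReal.le_ofReal_iff_toReal_le (measure_ne_top _ _) hδ.le).2
    ((le_abs_self _).trans hlt.le)

end MeasureTheory

/-- For a measurable family `{μ_x}` of finite measures on `ℝ^d` and a probability measure `ξ`
on `X`, for every `ε > 0` there is a measurable set `A` with `ξ(A) ≥ 1 - ε` on which the
family `{μ_x}_{x ∈ A}` is tight. -/
theorem tight_on_large_set (d : ℕ) {X : Type*} [MeasurableSpace X]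
    (μ : X → Measure (EuclideanSpace ℝ (Fin d)))
    (hfin : ∀ x, IsFiniteMeasure (μ x))
    (hmeas : ∀ A : Set (EuclideanSpace ℝ (Fin d)), MeasurableSet A →
      Measurable fun x => μ x A)
    (ξ : Measure X) [IsProbabilityMeasure ξ]
    (ε : ℝ) (hε : 0 < ε) :
    ∃ A : Set X, MeasurableSet A ∧ ENNReal.ofReal (1 - ε) ≤ ξ A ∧
      ∀ δ : ℝ, 0 < δ → ∃ r : ℝ, ∀ x ∈ A,
        μ x {y : EuclideanSpace ℝ (Fin d) | r < ‖y‖} ≤ ENNReal.ofReal δ := by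
  obtain ⟨t, ht, hξt, hunif⟩ :=
    exists_measure_le_tendstoUniformlyOn_measureReal_norm_gt μ hmeas ξ hε
  refine ⟨tᶜ, ht.compl, ?_, fun δ hδ => ?_⟩
  · calc ENNReal.ofReal (1 - ε) = 1 - ENNReal.ofReal ε := by
          rw [ENNReal.ofReal_sub _ hε.le, ENNReal.ofReal_one]
      _ ≤ 1 - ξ t := tsub_le_tsub_left hξt 1
      _ = ξ tᶜ := (prob_compl_eq_one_sub ht).symm
  · obtain ⟨n, hn⟩ := exists_forall_measure_le_of_tendstoUniformlyOn μ hunif hδ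
    exact ⟨n, hn⟩
end
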